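/- arXiv:2206.14102 — 5 statements merged into one kernel-verified Lean document; each statement's English description precedes it below -/
import Mathlib

section
/- Let f : ℝ^N → ℝ be Lebesgue integrable and let 𝓡 be a collection of closed N-dimensional intervals (boxes) with sides parallel to the axes, each centered at the origin and with non-empty interior, which is totally ordered by inclusion (for any R_i, R_j ∈ 𝓡, either R_i ⊆ R_j or R_j ⊆ R_i). Then for Lebesgue-almost every x ∈ ℝ^N the following holds: for every sequence (R_n) of members of 𝓡 with diam(R_n) → 0, one has (1/vol(R_n)) ∫_{R_n} f(x − y) dy → f(x) as n → ∞. -/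
/-!
Let `W` be the half-widths of the boxes, a chain for the coordinatewise order. If the translates
`x + [-c, c]` and `y + [-c', c']` (`c, c' ∈ W`) meet and `∏ c ≤ 2 ∏ c'`, then `x` lies in
`y + [-2d, 2d]`, where `d`, the larger of `c` and `c'`, is a member of `W` above `c'` with
`∏ d ≤ 2 ∏ c'`. These members form a bounded chain, whose coordinatewise supremum lies in its
closure, so the union of the boxes `y + [-2d, 2d]` has volume at most `2 ^ (N + 1)` times
that of `y + [-c', c']`. This replaces the doubling of balls in the Vitali covering argument: the
translates of the boxes form a Vitali family for Lebesgue measure, and the Lebesgue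
differentiation theorem for Vitali families applies.
-/

open MeasureTheory Filter Topology Set Metric
open scoped NNReal ENNReal

section Covering

variable {α ι : Type*}

theorem measure_eq_zero_of_forall_finset_subset_iUnion [MeasurableSpace α] {μ : Measure α}
    [Countable ι] {B e : ι → Set α} {C : ℝ≥0} {S : Set α} (hB : ∑' i, μ (B i) ≠ ∞)
    (he : ∀ i, μ (e i) ≤ C * μ (B i)) (hS : ∀ w : Finset ι, S ⊆ ⋃ i : {i // i ∉ w}, e i) :
    μ S = 0 := by
  have htail : Tendsto (fun w : Finset ι => C * ∑' i : {i // i ∉ w}, μ (B i)) atTop (𝓝 0) := by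
    simpa using ENNReal.Tendsto.const_mul (ENNReal.tendsto_tsum_compl_atTop_zero hB)
      (Or.inr ENNReal.coe_ne_top)
  refine le_antisymm (ge_of_tendsto' htail fun w => ?_) bot_le
  calc μ S ≤ μ (⋃ i : {i // i ∉ w}, e i) := measure_mono (hS w)
    _ ≤ ∑' i : {i // i ∉ w}, μ (e i) := measure_iUnion_le _
    _ ≤ ∑' i : {i // i ∉ w}, C * μ (B i) := ENNReal.tsum_le_tsum fun i => he i
    _ = C * ∑' i : {i // i ∉ w}, μ (B i) := ENNReal.tsum_mul_left

variable [PseudoMetricSpace α] {t u : Set ι} {s : Set α} {r δ : ι → ℝ} {c : ι → α}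
  {B e : ι → Set α}

theorem exists_mem_enlargement_of_notMem_biUnion
    (hB : ∀ a ∈ t, B a ⊆ closedBall (c a) (r a))
    (he : ∀ a ∈ t, ∀ b ∈ t, (B a ∩ B b).Nonempty → δ a ≤ 2 * δ b → c a ∈ e b)
    (hclosed : ∀ a ∈ t, IsClosed (B a))
    (hf : ∀ x ∈ s, ∀ ε > 0, ∃ a ∈ t, r a ≤ ε ∧ c a = x) (hut : u ⊆ t)
    (hu : ∀ a ∈ {a ∈ t | r a ≤ 1}, ∃ b ∈ u, (B a ∩ B b).Nonempty ∧ δ a ≤ 2 * δ b)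
    {z : α} (hz : z ∈ s \ ⋃ b ∈ u, B b) {U : Set α} (hU : U ∈ 𝓝 z) {w : Set ι}
    (hw : w.Finite) (hwu : w ⊆ u) :
    ∃ b ∈ u \ w, (B b ∩ U).Nonempty ∧ z ∈ e b := by
  set k := ⋃ b ∈ w, B b
  have hk : IsClosed k := hw.isClosed_biUnion fun b hb => hclosed b (hut (hwu hb))
  have hzk : z ∉ k := fun h => hz.2 (biUnion_mono hwu (fun _ _ => subset_rfl) h)
  obtain ⟨d, hd, hdU⟩ : ∃ d > 0, closedBall z d ⊆ U \ k :=
    nhds_basis_closedBall.mem_iff.1 (inter_mem hU (hk.isOpen_compl.mem_nhds hzk))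
  obtain ⟨a, hat, hra, rfl⟩ := hf z hz.1 (min d 1) (lt_min hd one_pos)
  have haU : B a ⊆ U \ k :=
    (hB a hat).trans ((closedBall_subset_closedBall (hra.trans (min_le_left _ _))).trans hdU)
  obtain ⟨b, hbu, ⟨p, hpa, hpb⟩, hδ⟩ := hu a ⟨hat, hra.trans (min_le_right _ _)⟩
  have hbw : b ∉ w := fun hbw => (haU hpa).2 (mem_biUnion hbw hpb)
  exact ⟨b, ⟨hbu, hbw⟩, ⟨p, hpb, (haU hpa).1⟩, he a hat b (hut hbu) ⟨p, hpa, hpb⟩ hδ⟩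

theorem exists_disjoint_covering_ae_of_enlargement [ProperSpace α] [MeasurableSpace α]
    [OpensMeasurableSpace α] (μ : Measure α) [IsFiniteMeasureOnCompacts μ] (C : ℝ≥0) (M : ℝ)
    (hB : ∀ a ∈ t, B a ⊆ closedBall (c a) (r a))
    (hμe : ∀ a ∈ t, μ (e a) ≤ C * μ (B a))
    (he : ∀ a ∈ t, ∀ b ∈ t, (B a ∩ B b).Nonempty → δ a ≤ 2 * δ b → c a ∈ e b)
    (hδ : ∀ a ∈ t, 0 ≤ δ a) (hδM : ∀ a ∈ t, r a ≤ 1 → δ a ≤ M)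
    (hint : ∀ a ∈ t, (interior (B a)).Nonempty) (hclosed : ∀ a ∈ t, IsClosed (B a))
    (hf : ∀ x ∈ s, ∀ ε > 0, ∃ a ∈ t, r a ≤ ε ∧ c a = x) :
    ∃ u ⊆ t, u.Countable ∧ u.PairwiseDisjoint B ∧ μ (s \ ⋃ a ∈ u, B a) = 0 := by
  obtain ⟨u, hut', hdisj, hu⟩ := Vitali.exists_disjoint_subfamily_covering_enlargement B
    {a ∈ t | r a ≤ 1} δ 2 one_lt_two (fun a ha => hδ a ha.1) M (fun a ha => hδM a ha.1 ha.2)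
    (fun a ha => (hint a ha.1).mono interior_subset)
  have hut : u ⊆ t := fun a ha => (hut' ha).1
  have hcount : u.Countable := hdisj.countable_of_nonempty_interior fun a ha => hint a (hut ha)
  refine ⟨u, hut, hcount, hdisj, measure_null_of_locally_null _ fun x _ =>
    ⟨_, inter_mem_nhdsWithin _ (ball_mem_nhds x one_pos), ?_⟩⟩
  set v := {b ∈ u | (B b ∩ ball x 1).Nonempty}
  have hvu : v ⊆ u := fun b hb => hb.1
  have : Countable v := (hcount.mono hvu).to_subtype
  have hv3 : ⋃ b ∈ v, B b ⊆ closedBall x 3 := by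
    refine iUnion₂_subset fun b ⟨hbu, p, hpb, hpx⟩ q hqb => ?_
    have hrb : r b ≤ 1 := (hut' hbu).2
    have hp := hB b (hut hbu) hpb
    have hq := hB b (hut hbu) hqb
    rw [mem_closedBall] at hp hq ⊢
    rw [mem_ball] at hpx
    linarith [dist_triangle q (c b) x, dist_triangle (c b) p x, dist_comm p (c b)]
  refine measure_eq_zero_of_forall_finset_subset_iUnion (B := fun b : v => B b)
    (e := fun b : v => e b) (C := C) ?_ (fun b => hμe b (hut (hvu b.2))) fun w z hz => ?_
  · rw [← measure_biUnion (hcount.mono hvu) (hdisj.subset hvu)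
      fun b hb => (hclosed b (hut (hvu hb))).measurableSet]
    exact ((measure_mono hv3).trans_lt (isCompact_closedBall x 3).measure_lt_top).ne
  obtain ⟨b, ⟨hbu, hbw⟩, hbx, hzb⟩ := exists_mem_enlargement_of_notMem_biUnion hB he hclosed
    hf hut hu hz.1 (isOpen_ball.mem_nhds hz.2) (w.finite_toSet.image Subtype.val)
    (by rintro - ⟨b, -, rfl⟩; exact hvu b.2)
  exact mem_iUnion.2 ⟨⟨⟨b, hbu, hbx⟩, fun h => hbw ⟨_, h, rfl⟩⟩, hzb⟩

end Covering

theorem mem_Icc_two_nsmul_of_mem_inter {G : Type*} [AddCommGroup G] [PartialOrder G]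
    [IsOrderedAddMonoid G] {x y z c c' d : G} (hx : z ∈ Icc (x - c) (x + c))
    (hy : z ∈ Icc (y - c') (y + c')) (hc : c ≤ d) (hc' : c' ≤ d) :
    x ∈ Icc (y - 2 • d) (y + 2 • d) := by
  obtain ⟨hx₁, hx₂⟩ := hx
  obtain ⟨hy₁, hy₂⟩ := hy
  rw [two_nsmul]
  constructor
  · calc y - (d + d) ≤ y - (c' + c) := by gcongr
      _ = (y - c') - c := by abel
      _ ≤ z - c := by gcongr
      _ ≤ x := by rw [sub_le_iff_le_add]; exact hx₂
  · calc x ≤ z + c := by rw [← sub_le_iff_le_add]; exact hx₁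
      _ ≤ (y + c') + c := by gcongr
      _ = y + (c' + c) := by abel
      _ ≤ y + (d + d) := by gcongr

section Boxes

variable {ι : Type*}

def halfWidths (𝓡 : Set (Set (ι → ℝ))) : Set (ι → ℝ) :=
  {c | (∀ i, 0 < c i) ∧ Icc (-c) c ∈ 𝓡}

theorem isChain_halfWidths {𝓡 : Set (Set (ι → ℝ))} (hchain : ∀ R ∈ 𝓡, ∀ S ∈ 𝓡, R ⊆ S ∨ S ⊆ R) :
    IsChain (· ≤ ·) (halfWidths 𝓡) := by
  have hle : ∀ c ∈ halfWidths 𝓡, ∀ d, Icc (-c) c ⊆ Icc (-d) d → c ≤ d := fun c hc _ h =>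
    (h ⟨neg_le_self fun i => (hc.1 i).le, le_rfl⟩).2
  exact fun c hc d hd _ => (hchain _ hc.2 _ hd.2).imp (hle c hc d) (hle d hd c)

variable [Fintype ι]

theorem IsChain.sSup_mem_closure {A : Set (ι → ℝ)} (hA : IsChain (· ≤ ·) A) (hne : A.Nonempty)
    (hbdd : BddAbove A) : sSup A ∈ closure A := by
  refine Metric.mem_closure_iff.2 fun ε hε => ?_
  have hnear : ∀ i, ∃ d ∈ A, sSup A i - ε < d i := fun i => by
    obtain ⟨_, ⟨d, hd, rfl⟩, h⟩ := exists_lt_of_lt_csSup (hne.image _)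
      (show sSup A i - ε < sSup (Function.eval i '' A) by
        rw [← sSup_apply_eq_sSup_image]; linarith)
    exact ⟨d, hd, h⟩
  choose d hdA hd using hnear
  have : Nonempty A := hne.to_subtype
  obtain ⟨⟨m, hmA⟩, hm⟩ := (hA.directedOn.directed_val).finset_le
    (Finset.univ.image fun i => (⟨d i, hdA i⟩ : A))
  refine ⟨m, hmA, (dist_pi_lt_iff hε).2 fun i => ?_⟩
  have hdm : d i ≤ m := hm _ (Finset.mem_image_of_mem _ (Finset.mem_univ i))
  have hmD : m ≤ sSup A := le_csSup hbdd hmA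
  rw [Real.dist_eq, abs_sub_lt_iff]
  constructor <;> linarith [hd i, hdm i, hmD i]

theorem volume_Icc_sub_add (x d : ι → ℝ) :
    volume (Icc (x - d) (x + d)) = ∏ i, ENNReal.ofReal (2 * d i) := by
  simp only [Real.volume_Icc_pi, Pi.add_apply, Pi.sub_apply]
  congr 1 with i
  ring_nf

theorem continuous_volume_Icc_sub_add (x : ι → ℝ) :
    Continuous fun d => volume (Icc (x - d) (x + d)) := by
  simp_rw [volume_Icc_sub_add, ENNReal.ofReal, ← ENNReal.ofNNReal_finsetProd]
  fun_prop

theorem volume_biUnion_Icc_le_iSup_of_isChain {A : Set (ι → ℝ)} (hA : IsChain (· ≤ ·) A)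
    (hbdd : BddAbove A) (x : ι → ℝ) :
    volume (⋃ d ∈ A, Icc (x - d) (x + d)) ≤ ⨆ d ∈ A, volume (Icc (x - d) (x + d)) := by
  rcases A.eq_empty_or_nonempty with rfl | hne
  · simp
  have hsup : volume (Icc (x - sSup A) (x + sSup A)) ≤ ⨆ d ∈ A, volume (Icc (x - d) (x + d)) :=
    closure_minimal (fun d hd => le_iSup₂ (f := fun d _ => volume (Icc (x - d) (x + d))) d hd)
      (isClosed_le (continuous_volume_Icc_sub_add x) continuous_const)
      (hA.sSup_mem_closure hne hbdd)
  refine le_trans (measure_mono (iUnion₂_subset fun d hd => ?_)) hsup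
  exact Icc_subset_Icc (by gcongr; exact le_csSup hbdd hd) (by gcongr; exact le_csSup hbdd hd)

theorem bddAbove_setOf_le_of_prod_le {c : ι → ℝ} (hc : ∀ i, 0 < c i) (V : ℝ) :
    BddAbove {d | c ≤ d ∧ ∏ i, d i ≤ V} := by
  classical
  refine ⟨fun i => V / ∏ j ∈ Finset.univ.erase i, c j, fun d ⟨hcd, hdV⟩ i => ?_⟩
  have hpos : 0 < ∏ j ∈ Finset.univ.erase i, c j := Finset.prod_pos fun j _ => hc j
  rw [le_div_iff₀ hpos]
  calc d i * ∏ j ∈ Finset.univ.erase i, c j ≤ d i * ∏ j ∈ Finset.univ.erase i, d j := by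
        gcongr with j
        · exact (hc i).le.trans (hcd i)
        · exact fun j _ => (hc j).le
        · exact hcd _
    _ = ∏ j, d j := Finset.mul_prod_erase _ _ (Finset.mem_univ i)
    _ ≤ V := hdV

def boxEnlargement (W : Set (ι → ℝ)) (c y : ι → ℝ) : Set (ι → ℝ) :=
  ⋃ d ∈ {d ∈ W | c ≤ d ∧ ∏ i, d i ≤ 2 * ∏ i, c i}, Icc (y - 2 • d) (y + 2 • d)

variable {W : Set (ι → ℝ)} {c c' x y : ι → ℝ}

theorem volume_boxEnlargement_le (hW : IsChain (· ≤ ·) W) (hc : ∀ i, 0 < c i) (y : ι → ℝ) :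
    volume (boxEnlargement W c y) ≤ 2 ^ (Fintype.card ι + 1) * volume (Icc (y - c) (y + c)) := by
  set A := {d ∈ W | c ≤ d ∧ ∏ i, d i ≤ 2 * ∏ i, c i}
  have hmono : Monotone fun d : ι → ℝ => 2 • d := fun _ _ h => by
    simpa only [two_nsmul] using add_le_add h h
  have hchain : IsChain (· ≤ ·) ((2 • ·) '' A) :=
    (hW.mono (sep_subset _ _)).image_of_map_rel _ _ _ fun _ _ h => hmono h
  have hbdd : BddAbove ((2 • ·) '' A) :=
    hmono.map_bddAbove ((bddAbove_setOf_le_of_prod_le hc _).mono fun d hd => hd.2)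
  rw [boxEnlargement, ← biUnion_image (f := (2 • ·)) (g := fun d => Icc (y - d) (y + d))]
  refine (volume_biUnion_Icc_le_iSup_of_isChain hchain hbdd y).trans (iSup₂_le ?_)
  rintro - ⟨d, ⟨-, hcd, hd⟩, rfl⟩
  have hd0 : ∀ i, 0 ≤ d i := fun i => (hc i).le.trans (hcd i)
  rw [volume_Icc_sub_add, volume_Icc_sub_add,
    ← ENNReal.ofReal_prod_of_nonneg fun i _ => by
      simp only [Pi.smul_apply, nsmul_eq_mul]; have := hd0 i; positivity,
    ← ENNReal.ofReal_prod_of_nonneg fun i _ => by have := hc i; positivity,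
    show (2 : ℝ≥0∞) ^ (Fintype.card ι + 1) = ENNReal.ofReal (2 ^ (Fintype.card ι + 1)) by
      rw [ENNReal.ofReal_pow zero_le_two, ENNReal.ofReal_ofNat],
    ← ENNReal.ofReal_mul (by positivity)]
  refine ENNReal.ofReal_le_ofReal ?_
  simp only [Pi.smul_apply, nsmul_eq_mul, Finset.prod_mul_distrib, Finset.prod_const,
    Finset.card_univ]
  push_cast
  calc (2 : ℝ) ^ Fintype.card ι * (2 ^ Fintype.card ι * ∏ i, d i)
      ≤ 2 ^ Fintype.card ι * (2 ^ Fintype.card ι * (2 * ∏ i, c i)) := by gcongr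
    _ = 2 ^ (Fintype.card ι + 1) * (2 ^ Fintype.card ι * ∏ i, c i) := by ring

theorem mem_boxEnlargement (hW : IsChain (· ≤ ·) W) (hc : c ∈ W) (hc' : c' ∈ W)
    (hc'pos : ∀ i, 0 < c' i) (hint : (Icc (x - c) (x + c) ∩ Icc (y - c') (y + c')).Nonempty)
    (hprod : ∏ i, c i ≤ 2 * ∏ i, c' i) : x ∈ boxEnlargement W c' y := by
  obtain ⟨z, hzx, hzy⟩ := hint
  rcases hW.total hc hc' with h | h
  · have : ∏ i, c' i ≤ 2 * ∏ i, c' i := by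
      linarith [Finset.prod_pos fun i (_ : i ∈ Finset.univ) => hc'pos i]
    exact mem_biUnion ⟨hc', le_rfl, this⟩ (mem_Icc_two_nsmul_of_mem_inter hzx hzy h le_rfl)
  · exact mem_biUnion ⟨hc, h, hprod⟩ (mem_Icc_two_nsmul_of_mem_inter hzx hzy le_rfl h)

theorem Icc_sub_add_subset_closedBall (x c : ι → ℝ) : Icc (x - c) (x + c) ⊆ closedBall x ‖c‖ :=
  fun z hz => (dist_pi_le_iff (norm_nonneg c)).2 fun i => by
    have h₁ := hz.1 i
    have h₂ := hz.2 i
    simp only [Pi.sub_apply, Pi.add_apply] at h₁ h₂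
    rw [Real.dist_eq, abs_le]
    constructor <;> linarith [le_abs_self (c i), norm_le_pi_norm c i, Real.norm_eq_abs (c i)]

theorem mem_interior_Icc_sub_add (hc : ∀ i, 0 < c i) (x : ι → ℝ) :
    x ∈ interior (Icc (x - c) (x + c)) := by
  rw [← pi_univ_Icc, mem_interior_iff_mem_nhds]
  exact set_pi_mem_nhds finite_univ fun i _ =>
    Icc_mem_nhds (by simpa using hc i) (by simpa using hc i)

theorem norm_le_of_Icc_sub_add_subset_closedBall (hc : 0 ≤ c) {ε : ℝ}
    (h : Icc (x - c) (x + c) ⊆ closedBall x ε) : ‖c‖ ≤ ε := by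
  simpa using h ⟨(sub_le_self x hc).trans (le_add_of_nonneg_right hc), le_rfl⟩

theorem setAverage_Icc_sub_add_eq (f : (ι → ℝ) → ℝ) (x c : ι → ℝ) :
    ⨍ y in Icc (x - c) (x + c), f y =
      (volume (Icc (-c) c)).toReal⁻¹ * ∫ y in Icc (-c) c, f (x - y) := by
  have hpre : (x - ·) ⁻¹' Icc (x - c) (x + c) = Icc (-c) c := by
    rw [preimage_const_sub_Icc, sub_add_cancel_left, sub_sub_cancel]
  have hmp := (volume : Measure (ι → ℝ)).measurePreserving_sub_left x
  rw [setAverage_eq, smul_eq_mul, measureReal_def, ← hpre,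
    hmp.setIntegral_preimage_emb (measurableEmbedding_subLeft x),
    hmp.measure_preimage measurableSet_Icc.nullMeasurableSet]

def boxVitaliFamily (W : Set (ι → ℝ)) (hpos : ∀ c ∈ W, ∀ i, 0 < c i)
    (hW : IsChain (· ≤ ·) W) (hsmall : ∀ ε > 0, ∃ c ∈ W, ‖c‖ ≤ ε) :
    VitaliFamily (volume : Measure (ι → ℝ)) where
  setsAt x := (fun c => Icc (x - c) (x + c)) '' W
  measurableSet _ := by
    rintro - ⟨c, -, rfl⟩
    exact measurableSet_Icc
  nonempty_interior x := by
    rintro - ⟨c, hc, rfl⟩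
    exact ⟨x, mem_interior_Icc_sub_add (hpos c hc) x⟩
  nontrivial x ε hε := by
    obtain ⟨c, hc, hcε⟩ := hsmall ε hε
    exact ⟨_, ⟨c, hc, rfl⟩,
      (Icc_sub_add_subset_closedBall x c).trans (closedBall_subset_closedBall hcε)⟩
  covering s f hfW hfine := by
    obtain ⟨u, hut, -, hdisj, hnull⟩ := exists_disjoint_covering_ae_of_enlargement
      (t := {p | p.1 ∈ s ∧ p.2 ∈ W ∧ Icc (p.1 - p.2) (p.1 + p.2) ∈ f p.1})
      (r := fun p => ‖p.2‖) (δ := fun p => ∏ i, p.2 i) (c := Prod.fst)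
      (B := fun p => Icc (p.1 - p.2) (p.1 + p.2)) (e := fun p => boxEnlargement W p.2 p.1)
      volume (2 ^ (Fintype.card ι + 1)) 1
      (fun p _ => Icc_sub_add_subset_closedBall p.1 p.2)
      (fun p hp => by simpa using volume_boxEnlargement_le hW (hpos _ hp.2.1) p.1)
      (fun p hp q hq hpq hprod => mem_boxEnlargement hW hp.2.1 hq.2.1 (hpos _ hq.2.1) hpq hprod)
      (fun p hp => Finset.prod_nonneg fun i _ => (hpos _ hp.2.1 i).le)
      (fun p hp hr => Finset.prod_le_one (fun i _ => (hpos _ hp.2.1 i).le) fun i _ =>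
        (le_abs_self _).trans ((norm_le_pi_norm p.2 i).trans hr))
      (fun p hp => ⟨p.1, mem_interior_Icc_sub_add (hpos _ hp.2.1) p.1⟩)
      (fun _ _ => isClosed_Icc)
      (fun x hx ε hε => by
        obtain ⟨a, haf, haε⟩ := hfine x hx ε hε
        obtain ⟨c, hc, rfl⟩ := hfW x hx haf
        exact ⟨(x, c), ⟨hx, hc, haf⟩,
          norm_le_of_Icc_sub_add_subset_closedBall (fun i => (hpos c hc i).le) haε, rfl⟩)
    refine ⟨(fun p => (p.1, Icc (p.1 - p.2) (p.1 + p.2))) '' u, ?_, ?_, ?_, ?_⟩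
    · rintro - ⟨p, hp, rfl⟩
      exact (hut hp).1
    · rintro - ⟨p, hp, rfl⟩ - ⟨q, hq, rfl⟩ hpq
      exact hdisj hp hq fun h => hpq (by rw [h])
    · rintro - ⟨p, hp, rfl⟩
      exact (hut hp).2.2
    · rwa [biUnion_image]

theorem tendsto_Icc_sub_add_filterAt {α : Type*} {l : Filter α} (hpos : ∀ c ∈ W, ∀ i, 0 < c i)
    (hW : IsChain (· ≤ ·) W) (hsmall : ∀ ε > 0, ∃ c ∈ W, ‖c‖ ≤ ε) {c : α → ι → ℝ}
    (hc : ∀ n, c n ∈ W) (hlim : Tendsto (‖c ·‖) l (𝓝 0)) (x : ι → ℝ) :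
    Tendsto (fun n => Icc (x - c n) (x + c n)) l
      ((boxVitaliFamily W hpos hW hsmall).filterAt x) := by
  refine (VitaliFamily.tendsto_filterAt_iff _).2
    ⟨Eventually.of_forall fun n => ⟨c n, hc n, rfl⟩, fun ε hε => ?_⟩
  filter_upwards [hlim.eventually (eventually_le_nhds hε)] with n hn
  exact (Icc_sub_add_subset_closedBall x (c n)).trans (closedBall_subset_closedBall hn)

theorem norm_le_diam_Icc_neg (hc : 0 ≤ c) : ‖c‖ ≤ diam (Icc (-c) c) := by
  simpa using dist_le_diam_of_mem (isBounded_Icc (-c) c) ⟨neg_le_self hc, le_rfl⟩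
    ⟨neg_nonpos.2 hc, hc⟩

theorem exists_halfWidths_of_tendsto_diam {𝓡 : Set (Set (ι → ℝ))}
    (hbox : ∀ R ∈ 𝓡, ∃ c : ι → ℝ, (∀ i, 0 < c i) ∧ R = Icc (-c) c) {R : ℕ → Set (ι → ℝ)}
    (hR : ∀ n, R n ∈ 𝓡) (hdiam : Tendsto (fun n => diam (R n)) atTop (𝓝 0)) :
    ∃ c : ℕ → ι → ℝ, (∀ n, c n ∈ halfWidths 𝓡 ∧ R n = Icc (-c n) (c n)) ∧
      Tendsto (‖c ·‖) atTop (𝓝 0) := by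
  choose c hc hRc using fun n => hbox _ (hR n)
  refine ⟨c, fun n => ⟨⟨hc n, hRc n ▸ hR n⟩, hRc n⟩,
    squeeze_zero (fun _ => norm_nonneg _) (fun n => ?_) hdiam⟩
  rw [hRc n]
  exact norm_le_diam_Icc_neg fun i => (hc n i).le

end Boxes

/-- **Theorem `thmLebesgue`.** Lebesgue differentiation theorem along a
family `𝓡` of closed `N`-dimensional intervals centered at the origin, with nonempty
interior, totally ordered by inclusion: for a Lebesgue integrable `f : ℝ^N → ℝ` and
almost every `x`, for every sequence `(R n)` of members of `𝓡` with `diam (R n) → 0`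
one has `(1 / vol (R n)) ∫_{R n} f (x - y) dy → f x`. -/
theorem lebesgue_differentiation_boxes {N : ℕ} (f : (Fin N → ℝ) → ℝ)
    (hf : Integrable f (volume : Measure (Fin N → ℝ)))
    (𝓡 : Set (Set (Fin N → ℝ)))
    (hbox : ∀ R ∈ 𝓡, ∃ c : Fin N → ℝ, (∀ k, 0 < c k) ∧ R = Icc (-c) c)
    (hchain : ∀ R ∈ 𝓡, ∀ S ∈ 𝓡, R ⊆ S ∨ S ⊆ R) :
    ∀ᵐ x ∂(volume : Measure (Fin N → ℝ)),
      ∀ R : ℕ → Set (Fin N → ℝ), (∀ n, R n ∈ 𝓡) →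
        Tendsto (fun n => Metric.diam (R n)) atTop (𝓝 0) →
        Tendsto (fun n => ((volume (R n)).toReal)⁻¹ * ∫ y in R n, f (x - y)) atTop
          (𝓝 (f x)) := by
  have hpos : ∀ c ∈ halfWidths 𝓡, ∀ k, 0 < c k := fun c hc => hc.1
  have hW := isChain_halfWidths hchain
  by_cases hsmall : ∀ ε > 0, ∃ c ∈ halfWidths 𝓡, ‖c‖ ≤ ε
  · filter_upwards [(boxVitaliFamily _ hpos hW hsmall).ae_tendsto_average hf.locallyIntegrable]
      with x hx R hR hdiam
    obtain ⟨c, hc, hlim⟩ := exists_halfWidths_of_tendsto_diam hbox hR hdiam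
    refine (hx.comp (tendsto_Icc_sub_add_filterAt hpos hW hsmall (fun n => (hc n).1) hlim x)).congr
      fun n => ?_
    rw [Function.comp_apply, setAverage_Icc_sub_add_eq, (hc n).2]
  · -- no sequence of members of `𝓡` has diameters tending to `0`
    push Not at hsmall
    obtain ⟨ε, hε, hbig⟩ := hsmall
    refine Eventually.of_forall fun x R hR hdiam => ?_
    obtain ⟨c, hc, hlim⟩ := exists_halfWidths_of_tendsto_diam hbox hR hdiam
    obtain ⟨n, hn⟩ := (hlim.eventually (gt_mem_nhds hε)).exists
    exact absurd hn (hbig _ (hc n).1).not_gt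
end

section
/- For n ∈ ℕ and f : [0,1] → ℝ define the Bernstein–Kantorovich operator K_n(f)(x) = (n+1) · Σ_{k=0}^n binom(n,k) x^k (1−x)^{n−k} ∫_{k/(n+1)}^{(k+1)/(n+1)} f(t) dt. If f : [0,1] → ℝ is Riemann integrable (i.e. bounded with Lebesgue-null set of discontinuity points) and x ∈ [0,1] is a point of continuity of f, then K_n(f)(x) → f(x) as n → ∞. In particular K_n(f)(x) → f(x) for Lebesgue-almost every x ∈ [0,1]. -/
open MeasureTheory Filter Topology Set

/-- The Bernstein–Kantorovich operator
`K_n(f)(x) = (n+1) Σ_{k=0}^n C(n,k) x^k (1-x)^{n-k} ∫_{k/(n+1)}^{(k+1)/(n+1)} f`. -/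
noncomputable def bernsteinKantorovich (n : ℕ) (f : ℝ → ℝ) (x : ℝ) : ℝ :=
  ((n : ℝ) + 1) * ∑ k ∈ Finset.range (n + 1),
    (n.choose k : ℝ) * x ^ k * (1 - x) ^ (n - k) *
      ∫ t in ((k : ℝ) / ((n : ℝ) + 1))..(((k : ℝ) + 1) / ((n : ℝ) + 1)), f t

/-!
`K_n f x - f x` is the average, with the Bernstein weights `b_{n,k}(x)`, of the means of
`f - f x` over the intervals `[k/(n+1), (k+1)/(n+1)]`. Given `ε`, continuity at `x` yields `δ`;
on intervals near `x` the mean is at most `ε`, and on the others it is at most `2M`, which is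
dominated by `(8M/δ²) (k/(n+1) - x)²`. The Bernstein variance identity makes the weighted average
of the latter `O(1/n)`. Riemann integrability enters only through Lebesgue integrability of `f`
on `[0,1]` (boundedness plus a.e. continuity), which the linear manipulations of the interval
integrals require.
-/

section AEContinuous

variable {α β : Type*} [MeasurableSpace α] [TopologicalSpace α] [OpensMeasurableSpace α]
  {μ : Measure α} {s : Set α}

theorem aestronglyMeasurable_of_ae_continuousWithinAt [TopologicalSpace β]
    [SecondCountableTopologyEither α β] [TopologicalSpace.PseudoMetrizableSpace β] {f : α → β}
    (hs : MeasurableSet s) (hc : ∀ᵐ x ∂μ.restrict s, ContinuousWithinAt f s x) :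
    AEStronglyMeasurable f (μ.restrict s) := by
  set T := toMeasurable (μ.restrict s) {x | ContinuousWithinAt f s x}ᶜ
  have hT : μ.restrict s T = 0 := by rw [measure_toMeasurable]; exact hc
  have hcont : ContinuousOn f (Tᶜ ∩ s) := fun x hx =>
    (not_not.1 fun h => hx.1 (subset_toMeasurable _ _ h)).mono inter_subset_right
  have hfull : (μ.restrict s).restrict Tᶜ = μ.restrict s :=
    Measure.restrict_eq_self_of_ae_mem (measure_eq_zero_iff_ae_notMem.1 hT)
  rw [← hfull, Measure.restrict_restrict (measurableSet_toMeasurable _ _).compl]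
  exact hcont.aestronglyMeasurable ((measurableSet_toMeasurable _ _).compl.inter hs)

theorem integrableOn_of_bounded_of_ae_continuousWithinAt [SecondCountableTopology α]
    {E : Type*} [NormedAddCommGroup E] {f : α → E} (hs : MeasurableSet s) (hμs : μ s < ⊤)
    (hb : ∃ M : ℝ, ∀ x ∈ s, ‖f x‖ ≤ M)
    (hc : ∀ᵐ x ∂μ.restrict s, ContinuousWithinAt f s x) :
    IntegrableOn f s μ := by
  obtain ⟨M, hM⟩ := hb
  exact .of_bound hμs (aestronglyMeasurable_of_ae_continuousWithinAt hs hc) M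
    ((ae_restrict_mem hs).mono hM)

end AEContinuous

theorem dist_le_add_mul_dist_sq {α β : Type*} [PseudoMetricSpace α] [PseudoMetricSpace β]
    {f : α → β} {s : Set α} {x t a : α} {δ ε B : ℝ} (hδ : 0 < δ) (hε : 0 ≤ ε)
    (hnear : ∀ t ∈ s, dist t x < δ → dist (f t) (f x) ≤ ε)
    (hB : ∀ t ∈ s, dist (f t) (f x) ≤ B) (ht : t ∈ s) (hta : dist t a ≤ δ / 2) :
    dist (f t) (f x) ≤ ε + 4 * B / δ ^ 2 * dist a x ^ 2 := by
  have hB0 : 0 ≤ B := dist_nonneg.trans (hB t ht)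
  by_cases htx : dist t x < δ
  · have : 0 ≤ 4 * B / δ ^ 2 * dist a x ^ 2 := by positivity
    linarith [hnear t ht htx]
  · have hax : δ / 2 ≤ dist a x := by
      linarith [dist_triangle t a x, not_lt.1 htx]
    have hsq : δ ^ 2 / 4 ≤ dist a x ^ 2 := by nlinarith
    have : B ≤ 4 * B / δ ^ 2 * dist a x ^ 2 := by
      rw [div_mul_eq_mul_div, le_div_iff₀ (by positivity)]
      nlinarith
    linarith [hB t ht]

section Bernstein

variable {n : ℕ} {x : ℝ}

theorem bernsteinPolynomial_eval_eq (n k : ℕ) (x : ℝ) :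
    (bernsteinPolynomial ℝ n k).eval x = n.choose k * x ^ k * (1 - x) ^ (n - k) := by
  simp [bernsteinPolynomial]

theorem bernsteinPolynomial_eval_nonneg (k : ℕ) (hx : x ∈ Icc (0 : ℝ) 1) :
    0 ≤ (bernsteinPolynomial ℝ n k).eval x := by
  have h0 : 0 ≤ x := hx.1
  have h1 : 0 ≤ 1 - x := by linarith [hx.2]
  rw [bernsteinPolynomial_eval_eq]
  positivity

theorem sum_bernsteinPolynomial_eval (n : ℕ) (x : ℝ) :
    ∑ k ∈ Finset.range (n + 1), (bernsteinPolynomial ℝ n k).eval x = 1 := by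
  simpa [Polynomial.eval_finsetSum] using
    congrArg (Polynomial.eval x) (bernsteinPolynomial.sum ℝ n)

theorem sum_sq_mul_bernsteinPolynomial_eval (n : ℕ) (x : ℝ) :
    ∑ k ∈ Finset.range (n + 1), (n * x - k) ^ 2 * (bernsteinPolynomial ℝ n k).eval x
      = n * x * (1 - x) := by
  simpa [Polynomial.eval_finsetSum, nsmul_eq_mul] using
    congrArg (Polynomial.eval x) (bernsteinPolynomial.variance ℝ n)

theorem sum_bernsteinPolynomial_eval_mul_sq_le (hx : x ∈ Icc (0 : ℝ) 1) :
    ∑ k ∈ Finset.range (n + 1), (bernsteinPolynomial ℝ n k).eval x * ((k : ℝ) / (n + 1) - x) ^ 2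
      ≤ 2 / ((n : ℝ) + 1) := by
  set b := fun k => (bernsteinPolynomial ℝ n k).eval x
  have hm : (0 : ℝ) < n + 1 := by positivity
  calc ∑ k ∈ Finset.range (n + 1), b k * (k / (n + 1) - x) ^ 2
      = (∑ k ∈ Finset.range (n + 1), ((n * x - k) + x) ^ 2 * b k) / (n + 1) ^ 2 := by
        rw [Finset.sum_div]
        refine Finset.sum_congr rfl fun k _ => ?_
        field_simp
        ring
    _ ≤ (∑ k ∈ Finset.range (n + 1), (2 * ((n * x - k) ^ 2 * b k) + 2 * x ^ 2 * b k))
          / (n + 1) ^ 2 := by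
        gcongr with k
        have := bernsteinPolynomial_eval_nonneg (n := n) k hx
        nlinarith [sq_nonneg (n * x - k - x)]
    _ = (2 * (n * (x * (1 - x))) + 2 * x ^ 2) / (n + 1) ^ 2 := by
        rw [Finset.sum_add_distrib, ← Finset.mul_sum, ← Finset.mul_sum,
          sum_sq_mul_bernsteinPolynomial_eval, sum_bernsteinPolynomial_eval]
        ring
    _ ≤ 2 / (n + 1) := by
        rw [div_le_div_iff₀ (by positivity) hm]
        have : x * (1 - x) ≤ 1 / 4 := by nlinarith [sq_nonneg (2 * x - 1)]
        have : x ^ 2 ≤ 1 := by nlinarith [hx.1, hx.2]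
        have : (n : ℝ) * (x * (1 - x)) ≤ n * (1 / 4) := by gcongr
        nlinarith

end Bernstein

section Kantorovich

variable {f : ℝ → ℝ} {n : ℕ} {x : ℝ}

theorem bernsteinKantorovich_eq_sum (n : ℕ) (f : ℝ → ℝ) (x : ℝ) :
    bernsteinKantorovich n f x = ∑ k ∈ Finset.range (n + 1), (bernsteinPolynomial ℝ n k).eval x *
      ((n + 1) * ∫ t in ((k : ℝ) / (n + 1))..((k + 1) / (n + 1)), f t) := by
  rw [bernsteinKantorovich, Finset.mul_sum]
  refine Finset.sum_congr rfl fun k _ => ?_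
  rw [bernsteinPolynomial_eval_eq]
  ring

theorem Icc_div_subset_Icc_zero_one {k : ℕ} (hk : k < n + 1) :
    Icc ((k : ℝ) / (n + 1)) ((k + 1) / (n + 1)) ⊆ Icc 0 1 := by
  have : (k : ℝ) + 1 ≤ n + 1 := by exact_mod_cast hk
  exact Icc_subset_Icc (by positivity) ((div_le_one (by positivity)).2 this)

theorem bernsteinKantorovich_sub_const (hf : IntegrableOn f (Icc 0 1)) (n : ℕ) (x c : ℝ) :
    bernsteinKantorovich n f x - c = ∑ k ∈ Finset.range (n + 1),
      (bernsteinPolynomial ℝ n k).eval x *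
        ((n + 1) * ∫ t in ((k : ℝ) / (n + 1))..((k + 1) / (n + 1)), (f t - c)) := by
  have hmean : ∀ k < n + 1,
      (n + 1) * ∫ t in ((k : ℝ) / (n + 1))..((k + 1) / (n + 1)), (f t - c)
        = (n + 1) * (∫ t in ((k : ℝ) / (n + 1))..((k + 1) / (n + 1)), f t) - c := by
    intro k hk
    have hfk : IntervalIntegrable f volume ((k : ℝ) / (n + 1)) ((k + 1) / (n + 1)) :=
      (intervalIntegrable_iff_integrableOn_Icc_of_le (by gcongr; simp)).2
        (hf.mono_set (Icc_div_subset_Icc_zero_one hk))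
    rw [intervalIntegral.integral_sub hfk intervalIntegrable_const, intervalIntegral.integral_const,
      smul_eq_mul]
    field_simp
    ring
  rw [Finset.sum_congr rfl fun k hk => by rw [hmean k (Finset.mem_range.1 hk), mul_sub],
    Finset.sum_sub_distrib, ← Finset.sum_mul, sum_bernsteinPolynomial_eval, one_mul,
    bernsteinKantorovich_eq_sum]

theorem abs_bernsteinKantorovich_sub_le (hf : IntegrableOn f (Icc 0 1)) (hx : x ∈ Icc (0 : ℝ) 1)
    {c : ℝ} {C : ℕ → ℝ} (hC : ∀ k < n + 1,
      ∀ t ∈ Icc ((k : ℝ) / (n + 1)) ((k + 1) / (n + 1)), |f t - c| ≤ C k) :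
    |bernsteinKantorovich n f x - c|
      ≤ ∑ k ∈ Finset.range (n + 1), (bernsteinPolynomial ℝ n k).eval x * C k := by
  have hm : (0 : ℝ) < n + 1 := by positivity
  rw [bernsteinKantorovich_sub_const hf]
  refine (Finset.abs_sum_le_sum_abs _ _).trans (Finset.sum_le_sum fun k hk => ?_)
  have hle : (k : ℝ) / (n + 1) ≤ (k + 1) / (n + 1) := by gcongr; simp
  have hint := intervalIntegral.norm_integral_le_of_norm_le_const (f := fun t => f t - c)
    (C := C k) fun t ht =>
      hC k (Finset.mem_range.1 hk) t (Ioc_subset_Icc_self (uIoc_of_le hle ▸ ht))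
  have hlen : |(k + 1) / (n + 1) - (k : ℝ) / (n + 1)| = 1 / (n + 1) := by
    rw [← sub_div, add_sub_cancel_left, abs_of_pos (by positivity)]
  rw [Real.norm_eq_abs, hlen] at hint
  rw [abs_mul, abs_of_nonneg (bernsteinPolynomial_eval_nonneg k hx), abs_mul, abs_of_pos hm]
  refine mul_le_mul_of_nonneg_left ?_ (bernsteinPolynomial_eval_nonneg k hx)
  calc (n + 1) * |_| ≤ (n + 1) * (C k * (1 / (n + 1))) := by gcongr
    _ = C k := by field_simp

theorem abs_bernsteinKantorovich_sub_le_of_forall_dist_lt {M δ ε : ℝ}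
    (hM : ∀ t ∈ Icc (0 : ℝ) 1, |f t| ≤ M) (hf : IntegrableOn f (Icc 0 1)) (hx : x ∈ Icc (0 : ℝ) 1)
    (hδ : 0 < δ) (hε : 0 ≤ ε) (hnear : ∀ t ∈ Icc (0 : ℝ) 1, dist t x < δ → dist (f t) (f x) ≤ ε)
    (hn : 1 / (n + 1) ≤ δ / 2) :
    |bernsteinKantorovich n f x - f x| ≤ ε + 16 * M / δ ^ 2 * (1 / (n + 1)) := by
  have hM0 : 0 ≤ M := (abs_nonneg _).trans (hM x hx)
  have hB : ∀ t ∈ Icc (0 : ℝ) 1, dist (f t) (f x) ≤ 2 * M := fun t ht => by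
    linarith [dist_le_norm_add_norm (f t) (f x), hM t ht, hM x hx, Real.norm_eq_abs (f t),
      Real.norm_eq_abs (f x)]
  have hnode : ∀ k < n + 1, ∀ t ∈ Icc ((k : ℝ) / (n + 1)) ((k + 1) / (n + 1)),
      |f t - f x| ≤ ε + 4 * (2 * M) / δ ^ 2 * dist ((k : ℝ) / (n + 1)) x ^ 2 := by
    intro k hk t ht
    refine dist_le_add_mul_dist_sq hδ hε hnear hB (Icc_div_subset_Icc_zero_one hk ht) ?_
    rw [Real.dist_eq, abs_of_nonneg (by linarith [ht.1])]
    have : ((k : ℝ) + 1) / (n + 1) = k / (n + 1) + 1 / (n + 1) := by ring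
    linarith [ht.2]
  calc |bernsteinKantorovich n f x - f x|
      ≤ ∑ k ∈ Finset.range (n + 1), (bernsteinPolynomial ℝ n k).eval x *
          (ε + 4 * (2 * M) / δ ^ 2 * dist ((k : ℝ) / (n + 1)) x ^ 2) :=
        abs_bernsteinKantorovich_sub_le hf hx hnode
    _ = ε + 8 * M / δ ^ 2 * ∑ k ∈ Finset.range (n + 1),
          (bernsteinPolynomial ℝ n k).eval x * ((k : ℝ) / (n + 1) - x) ^ 2 := by
        simp only [Real.dist_eq, sq_abs, mul_add, Finset.sum_add_distrib, ← Finset.sum_mul,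
          sum_bernsteinPolynomial_eval, one_mul, Finset.mul_sum]
        exact congrArg (ε + ·) (Finset.sum_congr rfl fun k _ => by ring)
    _ ≤ ε + 8 * M / δ ^ 2 * (2 / (n + 1)) := by
        gcongr
        exact sum_bernsteinPolynomial_eval_mul_sq_le hx
    _ = ε + 16 * M / δ ^ 2 * (1 / (n + 1)) := by ring

theorem tendsto_bernsteinKantorovich_of_continuousWithinAt {M : ℝ}
    (hM : ∀ t ∈ Icc (0 : ℝ) 1, |f t| ≤ M) (hf : IntegrableOn f (Icc 0 1)) (hx : x ∈ Icc (0 : ℝ) 1)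
    (hcx : ContinuousWithinAt f (Icc (0 : ℝ) 1) x) :
    Tendsto (fun n => bernsteinKantorovich n f x) atTop (𝓝 (f x)) := by
  refine Metric.tendsto_nhds.2 fun ε hε => ?_
  obtain ⟨δ, hδ, hnear⟩ := Metric.continuousWithinAt_iff.1 hcx (ε / 2) (half_pos hε)
  have hsmall : Tendsto (fun n : ℕ => 16 * M / δ ^ 2 * (1 / (n + 1))) atTop (𝓝 0) := by
    rw [← mul_zero (16 * M / δ ^ 2)]
    exact tendsto_one_div_add_atTop_nhds_zero_nat.const_mul _
  filter_upwards [hsmall.eventually_lt_const (half_pos hε),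
    tendsto_one_div_add_atTop_nhds_zero_nat.eventually_le_const (half_pos hδ)] with n hn hnδ
  rw [Real.dist_eq]
  have := abs_bernsteinKantorovich_sub_le_of_forall_dist_lt hM hf hx hδ (half_pos hε).le
    (fun t ht htx => (hnear ht htx).le) hnδ
  linarith

end Kantorovich

/-- **Theorem `thmLorentz`.** If `f : [0,1] → ℝ` is Riemann integrable
(bounded with Lebesgue-null set of discontinuity points), then
`K_n(f)(x) → f x` at every point of continuity `x ∈ [0,1]` of `f`; in particular
`K_n(f)(x) → f x` for Lebesgue-almost every `x ∈ [0,1]`. -/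
theorem bernsteinKantorovich_tendsto (f : ℝ → ℝ)
    (hfb : ∃ M : ℝ, ∀ x ∈ Icc (0 : ℝ) 1, |f x| ≤ M)
    (hfc : volume {x ∈ Icc (0 : ℝ) 1 | ¬ ContinuousWithinAt f (Icc (0 : ℝ) 1) x} = 0) :
    (∀ x ∈ Icc (0 : ℝ) 1, ContinuousWithinAt f (Icc (0 : ℝ) 1) x →
      Tendsto (fun n => bernsteinKantorovich n f x) atTop (𝓝 (f x))) ∧
    (∀ᵐ x ∂(volume.restrict (Icc (0 : ℝ) 1)),
      Tendsto (fun n => bernsteinKantorovich n f x) atTop (𝓝 (f x))) := by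
  have hcont : ∀ᵐ x ∂(volume.restrict (Icc (0 : ℝ) 1)), ContinuousWithinAt f (Icc (0 : ℝ) 1) x :=
    (ae_restrict_iff' measurableSet_Icc).2 (ae_iff.2 (by simpa only [Classical.not_imp] using hfc))
  have hint : IntegrableOn f (Icc 0 1) :=
    integrableOn_of_bounded_of_ae_continuousWithinAt measurableSet_Icc measure_Icc_lt_top
      (by simpa only [Real.norm_eq_abs] using hfb) hcont
  obtain ⟨M, hM⟩ := hfb
  refine ⟨fun x hx hcx => tendsto_bernsteinKantorovich_of_continuousWithinAt hM hint hx hcx, ?_⟩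
  filter_upwards [ae_restrict_mem measurableSet_Icc, hcont] with x hx hcx
  exact tendsto_bernsteinKantorovich_of_continuousWithinAt hM hint hx hcx
end

section
/- For n ≥ 1 and f : [0,∞) → ℝ define the Szász–Mirakjan–Kantorovich operator S_n(f)(x) = (n+1) e^{−nx} Σ_{k=0}^∞ ((nx)^k / k!) ∫_{k/n}^{(k+1)/n} f(t) dt. If f : [0,∞) → ℝ is bounded on [0,∞) and Riemann integrable on each compact subinterval of [0,∞) (i.e. its set of discontinuity points has Lebesgue measure zero), then S_n(f)(x) → f(x) as n → ∞ at every point x ∈ [0,∞) of continuity of f. -/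
/-!
Write `S_n = (1 + 1/n) K_n`, where `K_n f x` averages the means `n ∫_{k/n}^{(k+1)/n} f` against
the Poisson weights `e^{-nx} (nx)^k / k!`; it suffices that `K_n f x → f x`. Continuity at `x`
and boundedness give `|f t - f x| ≤ ε + C (t - x)²` on `[0, ∞)`, and since the Poisson weights
have mean and variance `nx`, `K_n` applied to this majorant is `ε + 2C (x/n + 1/n²)`. The null
discontinuity set is only needed to make `f` locally integrable.
-/

open MeasureTheory Filter Topology Set

/-- The Szász–Mirakjan–Kantorovich operator
`S_n(f)(x) = (n+1) e^{-nx} Σ_{k=0}^∞ ((nx)^k / k!) ∫_{k/n}^{(k+1)/n} f`. -/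
noncomputable def szaszMirakjanKantorovich (n : ℕ) (f : ℝ → ℝ) (x : ℝ) : ℝ :=
  ((n : ℝ) + 1) * Real.exp (-((n : ℝ) * x)) *
    ∑' k : ℕ, (((n : ℝ) * x) ^ k / (Nat.factorial k : ℝ)) *
      ∫ t in ((k : ℝ) / (n : ℝ))..(((k : ℝ) + 1) / (n : ℝ)), f t

open Real Nat

section PoissonMoments

variable (l : ℝ)

theorem hasSum_pow_div_factorial : HasSum (fun k : ℕ => l ^ k / k !) (exp l) := by
  simpa only [← Real.exp_eq_exp_ℝ] using NormedSpace.expSeries_div_hasSum_exp l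

theorem natCast_succ_mul_pow_succ_div_factorial (k : ℕ) :
    ((k + 1 : ℕ) : ℝ) * (l ^ (k + 1) / (k + 1)!) = l * (l ^ k / k !) := by
  rw [factorial_succ]
  push_cast
  field_simp
  ring

theorem hasSum_natCast_mul_pow_div_factorial :
    HasSum (fun k : ℕ => k * (l ^ k / k !)) (l * exp l) := by
  rw [← hasSum_nat_add_iff' 1]
  simpa only [natCast_succ_mul_pow_succ_div_factorial, Finset.range_one, Finset.sum_singleton,
    CharP.cast_eq_zero, zero_mul, sub_zero] using (hasSum_pow_div_factorial l).mul_left l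

theorem hasSum_descFactorial_two_mul_pow_div_factorial :
    HasSum (fun k : ℕ => k * (k - 1) * (l ^ k / k !)) (l ^ 2 * exp l) := by
  rw [← hasSum_nat_add_iff' 1]
  have hshift (k : ℕ) : ((k + 1 : ℕ) : ℝ) * ((k + 1 : ℕ) - 1) * (l ^ (k + 1) / (k + 1)!) =
      l * (k * (l ^ k / k !)) := by
    rw [mul_right_comm, natCast_succ_mul_pow_succ_div_factorial]
    push_cast
    ring
  simpa only [hshift, Finset.range_one, Finset.sum_singleton, CharP.cast_eq_zero, zero_mul,
    sub_zero, pow_two, mul_assoc] using (hasSum_natCast_mul_pow_div_factorial l).mul_left l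

theorem hasSum_sq_sub_mul_pow_div_factorial :
    HasSum (fun k : ℕ => (k - l) ^ 2 * (l ^ k / k !)) (l * exp l) := by
  have h := ((hasSum_descFactorial_two_mul_pow_div_factorial l).add
    ((hasSum_natCast_mul_pow_div_factorial l).mul_left (1 - 2 * l))).add
    ((hasSum_pow_div_factorial l).mul_left (l ^ 2))
  rw [show l * exp l = l ^ 2 * exp l + (1 - 2 * l) * (l * exp l) + l ^ 2 * exp l by ring]
  exact h.congr_fun fun k => by ring

theorem hasSum_pow_div_factorial_mul_add_mul_sq (A B : ℝ) :
    HasSum (fun k : ℕ => l ^ k / k ! * (A + B * (k - l) ^ 2)) ((A + B * l) * exp l) := by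
  have h := ((hasSum_pow_div_factorial l).mul_left A).add
    ((hasSum_sq_sub_mul_pow_div_factorial l).mul_left B)
  rw [show (A + B * l) * exp l = A * exp l + B * (l * exp l) by ring]
  exact h.congr_fun fun k => by ring

end PoissonMoments

section PoissonAverage

variable {l A B : ℝ} {b : ℕ → ℝ}

theorem norm_pow_div_factorial_mul_le (hl : 0 ≤ l) (hb : ∀ k, |b k| ≤ A + B * (k - l) ^ 2)
    (k : ℕ) : ‖l ^ k / k ! * b k‖ ≤ l ^ k / k ! * (A + B * (k - l) ^ 2) := by
  rw [Real.norm_eq_abs, abs_mul, abs_of_nonneg (by positivity)]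
  exact mul_le_mul_of_nonneg_left (hb k) (by positivity)

theorem summable_pow_div_factorial_mul (hl : 0 ≤ l) (hb : ∀ k, |b k| ≤ A + B * (k - l) ^ 2) :
    Summable (fun k : ℕ => l ^ k / k ! * b k) :=
  .of_norm_bounded (hasSum_pow_div_factorial_mul_add_mul_sq l A B).summable
    (norm_pow_div_factorial_mul_le hl hb)

theorem abs_tsum_pow_div_factorial_mul_le (hl : 0 ≤ l) (hb : ∀ k, |b k| ≤ A + B * (k - l) ^ 2) :
    |∑' k : ℕ, l ^ k / k ! * b k| ≤ (A + B * l) * exp l :=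
  tsum_of_norm_bounded (hasSum_pow_div_factorial_mul_add_mul_sq l A B)
    (norm_pow_div_factorial_mul_le hl hb)

end PoissonAverage

theorem aemeasurable_restrict_of_null_setOf_not_continuousWithinAt {α β : Type*}
    [TopologicalSpace α] [MeasurableSpace α] [OpensMeasurableSpace α] [TopologicalSpace β]
    [MeasurableSpace β] [BorelSpace β] {μ : Measure α} {f : α → β} {s : Set α}
    (hs : MeasurableSet s) (hf : μ {x ∈ s | ¬ContinuousWithinAt f s x} = 0) :
    AEMeasurable f (μ.restrict s) := by
  have hcont : ContinuousOn f (s \ {x ∈ s | ¬ContinuousWithinAt f s x}) := fun y hy =>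
    (of_not_not fun h => hy.2 ⟨hy.1, h⟩ : ContinuousWithinAt f s y).mono sdiff_subset
  rw [← Measure.restrict_congr_set (sdiff_null_ae_eq_self hf)]
  exact hcont.aemeasurable₀ (hs.nullMeasurableSet.diff (NullMeasurableSet.of_null hf))

theorem intervalIntegrable_of_abs_le_of_null_setOf_not_continuousWithinAt {f : ℝ → ℝ}
    {s : Set ℝ} {M a b : ℝ} (hs : MeasurableSet s) (hab : uIoc a b ⊆ s) (hM : ∀ t ∈ s, |f t| ≤ M)
    (hf : volume {x ∈ s | ¬ContinuousWithinAt f s x} = 0) : IntervalIntegrable f volume a b := by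
  rw [intervalIntegrable_iff]
  refine IntegrableOn.of_bound measure_Ioc_lt_top
    ((aemeasurable_restrict_of_null_setOf_not_continuousWithinAt hs hf).mono_measure
      (Measure.restrict_mono hab le_rfl)).aestronglyMeasurable M ?_
  filter_upwards [ae_restrict_mem measurableSet_uIoc] with t ht using hM t (hab ht)

theorem ContinuousWithinAt.exists_abs_sub_le_add_mul_sq {f : ℝ → ℝ} {s : Set ℝ} {x M ε : ℝ}
    (hf : ContinuousWithinAt f s x) (hx : x ∈ s) (hM : ∀ t ∈ s, |f t| ≤ M) (hε : 0 < ε) :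
    ∃ C, 0 ≤ C ∧ ∀ t ∈ s, |f t - f x| ≤ ε + C * (t - x) ^ 2 := by
  obtain ⟨δ, hδ, hfδ⟩ := Metric.continuousWithinAt_iff.1 hf ε hε
  have hM0 : 0 ≤ M := (abs_nonneg _).trans (hM x hx)
  refine ⟨2 * M / δ ^ 2, by positivity, fun t ht => ?_⟩
  by_cases hnear : |t - x| < δ
  · have hclose : |f t - f x| < ε := hfδ ht hnear
    have hquad : 0 ≤ 2 * M / δ ^ 2 * (t - x) ^ 2 := by positivity
    linarith
  · have hfar : δ ^ 2 ≤ (t - x) ^ 2 := by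
      rw [← sq_abs (t - x)]
      exact pow_le_pow_left₀ hδ.le (not_lt.1 hnear) 2
    calc |f t - f x| ≤ |f t| + |f x| := abs_sub _ _
      _ ≤ 2 * M / δ ^ 2 * δ ^ 2 := by
        rw [div_mul_cancel₀ _ (by positivity)]
        linarith [hM t ht, hM x hx]
      _ ≤ 2 * M / δ ^ 2 * (t - x) ^ 2 := by gcongr
      _ ≤ ε + 2 * M / δ ^ 2 * (t - x) ^ 2 := by linarith

theorem abs_intervalIntegral_le_of_abs_le_add_mul_sq {g : ℝ → ℝ} {a h x ε C : ℝ} (hh : 0 ≤ h)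
    (hC : 0 ≤ C) (hg : ∀ t ∈ Ioc a (a + h), |g t| ≤ ε + C * (t - x) ^ 2) :
    |∫ t in a..a + h, g t| ≤ h * (ε + 2 * C * ((a - x) ^ 2 + h ^ 2)) := by
  have hbound : ∀ t ∈ uIoc a (a + h), ‖g t‖ ≤ ε + 2 * C * ((a - x) ^ 2 + h ^ 2) := by
    intro t ht
    rw [uIoc_of_le (by linarith)] at ht
    have hstep : (t - a) ^ 2 ≤ h ^ 2 := pow_le_pow_left₀ (by linarith [ht.1]) (by linarith [ht.2]) 2
    have hsq : (t - x) ^ 2 ≤ 2 * ((a - x) ^ 2 + h ^ 2) := by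
      nlinarith [sq_nonneg (t - a - (a - x))]
    rw [Real.norm_eq_abs]
    nlinarith [hg t ht, mul_le_mul_of_nonneg_left hsq hC]
  have h := intervalIntegral.norm_integral_le_of_norm_le_const hbound
  rwa [Real.norm_eq_abs, add_sub_cancel_left, abs_of_nonneg hh, mul_comm] at h

/-- The operator `K_n` of the header; unlike `S_n` it fixes constants. -/
noncomputable def normalizedSzaszMirakjanKantorovich (n : ℕ) (f : ℝ → ℝ) (x : ℝ) : ℝ :=
  n * exp (-(n * x)) * ∑' k : ℕ, (n * x) ^ k / k ! * ∫ t in (k / n : ℝ)..((k + 1) / n), f t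

theorem szaszMirakjanKantorovich_eq_mul_normalized {n : ℕ} (hn : n ≠ 0) (f : ℝ → ℝ) (x : ℝ) :
    szaszMirakjanKantorovich n f x = (1 + 1 / n) * normalizedSzaszMirakjanKantorovich n f x := by
  rw [szaszMirakjanKantorovich, normalizedSzaszMirakjanKantorovich]
  field_simp

section Estimate

variable {f : ℝ → ℝ} {n : ℕ} {x ε C : ℝ}

theorem abs_natCast_mul_integral_sub_le (hn : 0 < n) (hC : 0 ≤ C)
    (hfx : ∀ t, 0 ≤ t → |f t - f x| ≤ ε + C * (t - x) ^ 2) (k : ℕ) :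
    |n * ∫ t in (k / n : ℝ)..((k + 1) / n), (f t - f x)| ≤
      (ε + 2 * C / n ^ 2) + 2 * C / n ^ 2 * (k - n * x) ^ 2 := by
  have hn' : (0 : ℝ) < n := by exact_mod_cast hn
  have h := abs_intervalIntegral_le_of_abs_le_add_mul_sq (g := fun t => f t - f x) (x := x)
    (one_div_nonneg.2 hn'.le) hC
    (fun t ht => hfx t ((by positivity : (0 : ℝ) ≤ k / n).trans ht.1.le))
  rw [add_div, abs_mul, abs_of_pos hn']
  calc n * |∫ t in (k / n : ℝ)..(k / n + 1 / n), (f t - f x)|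
      ≤ n * (1 / n * (ε + 2 * C * ((k / n - x) ^ 2 + (1 / n) ^ 2))) := by gcongr
    _ = (ε + 2 * C / n ^ 2) + 2 * C / n ^ 2 * (k - n * x) ^ 2 := by
      field_simp
      ring

theorem abs_normalizedSzaszMirakjanKantorovich_sub_le (hn : 0 < n) (hx : 0 ≤ x) (hC : 0 ≤ C)
    (hint : ∀ k : ℕ, IntervalIntegrable f volume (k / n) ((k + 1) / n))
    (hfx : ∀ t, 0 ≤ t → |f t - f x| ≤ ε + C * (t - x) ^ 2) :
    |normalizedSzaszMirakjanKantorovich n f x - f x| ≤ ε + 2 * C * (x / n + 1 / n ^ 2) := by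
  have hn' : (0 : ℝ) < n := by exact_mod_cast hn
  set l : ℝ := n * x
  set D : ℕ → ℝ := fun k => n * ∫ t in (k / n : ℝ)..((k + 1) / n), (f t - f x)
  have hD : ∀ k : ℕ, |D k| ≤ (ε + 2 * C / n ^ 2) + 2 * C / n ^ 2 * (k - l) ^ 2 :=
    abs_natCast_mul_integral_sub_le hn hC hfx
  have hmean (k : ℕ) : n * ∫ t in (k / n : ℝ)..((k + 1) / n), f t = D k + f x := by
    simp only [D, intervalIntegral.integral_sub (hint k) intervalIntegrable_const,
      intervalIntegral.integral_const, smul_eq_mul]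
    field_simp
    ring
  have hsum := summable_pow_div_factorial_mul (by positivity) hD
  have hexp := hasSum_pow_div_factorial l
  have hrepr : normalizedSzaszMirakjanKantorovich n f x - f x =
      exp (-l) * ∑' k : ℕ, l ^ k / k ! * D k := by
    calc normalizedSzaszMirakjanKantorovich n f x - f x
        = exp (-l) * ∑' k : ℕ, (l ^ k / k ! * D k + l ^ k / k ! * f x) - f x := by
          rw [normalizedSzaszMirakjanKantorovich, mul_comm (n : ℝ), mul_assoc, ← tsum_mul_left]
          simp only [← mul_add, ← hmean]
          congr 3 with k
          ring
      _ = exp (-l) * ∑' k : ℕ, l ^ k / k ! * D k := by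
          rw [hsum.tsum_add (hexp.summable.mul_right _), tsum_mul_right, hexp.tsum_eq, mul_add,
            ← mul_assoc, ← exp_add, neg_add_cancel, exp_zero, one_mul, add_sub_cancel_right]
  rw [hrepr, abs_mul, abs_of_pos (exp_pos _)]
  calc exp (-l) * |∑' k : ℕ, l ^ k / k ! * D k|
      ≤ exp (-l) * ((ε + 2 * C / n ^ 2 + 2 * C / n ^ 2 * l) * exp l) := by
        gcongr
        exact abs_tsum_pow_div_factorial_mul_le (by positivity) hD
    _ = ε + 2 * C * (x / n + 1 / n ^ 2) := by
        rw [mul_left_comm, ← exp_add, neg_add_cancel, exp_zero, mul_one]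
        field_simp
        ring

theorem tendsto_normalizedSzaszMirakjanKantorovich (hx : 0 ≤ x)
    (hint : ∀ n k : ℕ, IntervalIntegrable f volume (k / n) ((k + 1) / n))
    (hloc : ∀ ε > 0, ∃ C, 0 ≤ C ∧ ∀ t, 0 ≤ t → |f t - f x| ≤ ε + C * (t - x) ^ 2) :
    Tendsto (fun n => normalizedSzaszMirakjanKantorovich n f x) atTop (𝓝 (f x)) := by
  refine Metric.tendsto_nhds.2 fun ε hε => ?_
  obtain ⟨C, hC, hfx⟩ := hloc (ε / 2) (half_pos hε)
  have hbound : Tendsto (fun n : ℕ => ε / 2 + 2 * C * (x / n + 1 / n ^ 2)) atTop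
      (𝓝 (ε / 2)) := by
    have h := (tendsto_const_div_atTop_nhds_zero_nat x).add
      ((tendsto_const_div_atTop_nhds_zero_nat 1).pow 2)
    simpa [div_pow] using tendsto_const_nhds.add (h.const_mul (2 * C))
  filter_upwards [hbound.eventually (gt_mem_nhds (half_lt_self hε)), eventually_gt_atTop 0]
    with n hbn hn
  rw [Real.dist_eq]
  exact (abs_normalizedSzaszMirakjanKantorovich_sub_le hn hx hC (hint n) hfx).trans_lt hbn

end Estimate

/-- If `f : [0,∞) → ℝ` is bounded on `[0,∞)` and Riemann integrable
on each compact subinterval (its set of discontinuity points in `[0,∞)` has Lebesgue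
measure zero), then `S_n(f)(x) → f x` as `n → ∞` at every point `x ∈ [0,∞)` of
continuity of `f`. -/
theorem szaszMirakjanKantorovich_tendsto (f : ℝ → ℝ)
    (hfb : ∃ M : ℝ, ∀ x ∈ Ici (0 : ℝ), |f x| ≤ M)
    (hfc : volume {x ∈ Ici (0 : ℝ) | ¬ ContinuousWithinAt f (Ici (0 : ℝ)) x} = 0)
    (x : ℝ) (hx : x ∈ Ici (0 : ℝ)) (hfx : ContinuousWithinAt f (Ici (0 : ℝ)) x) :
    Tendsto (fun n => szaszMirakjanKantorovich n f x) atTop (𝓝 (f x)) := by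
  obtain ⟨M, hM⟩ := hfb
  have hint (n k : ℕ) : IntervalIntegrable f volume (k / n) ((k + 1) / n) :=
    intervalIntegrable_of_abs_le_of_null_setOf_not_continuousWithinAt measurableSet_Ici
      (fun t ht => (le_min (by positivity) (by positivity)).trans ht.1.le) hM hfc
  have hK := tendsto_normalizedSzaszMirakjanKantorovich hx hint fun ε hε =>
    hfx.exists_abs_sub_le_add_mul_sq hx hM hε
  have hscale : Tendsto (fun n : ℕ => 1 + 1 / (n : ℝ)) atTop (𝓝 1) := by
    simpa only [add_zero] using tendsto_one_div_atTop_nhds_zero_nat.const_add (1 : ℝ)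
  have hprod := hscale.mul hK
  rw [one_mul] at hprod
  refine hprod.congr' ?_
  filter_upwards [eventually_ne_atTop 0] with n hn
  exact (szaszMirakjanKantorovich_eq_mul_normalized hn f x).symm
end

section
/- Let S¹ = {(cos θ, sin θ) : θ ∈ [0, 2π)} ⊂ ℝ² be the unit circle equipped with a finite positive Borel measure μ, and let E be a vector sublattice of C(S¹), the continuous real-valued functions on S¹, containing the five test functions 1, pr_1, −pr_1, pr_2, −pr_2 restricted to S¹ (i.e. 1, cos, −cos, sin, −sin as functions of the angle). Let (T_n) be a sequence of weakly nonlinear (sublinear and translatable) and monotone operators from E into C(S¹) such that T_n(h)(x) → h(x) for μ-almost every x ∈ S¹ for each of the five test functions h. Then T_n(f)(x) → f(x) for μ-almost every x ∈ S¹, for every f ∈ E. -/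
open MeasureTheory Filter Topology Set

/-- The unit circle `S¹ = {(cos θ, sin θ) : θ ∈ [0, 2π)} ⊆ ℝ²`. -/
lemma isCompact_unitCircle' : IsCompact {p : ℝ × ℝ | p.1 ^ 2 + p.2 ^ 2 = 1} := by
  have h1 : IsClosed {p : ℝ × ℝ | p.1 ^ 2 + p.2 ^ 2 = 1} :=
    isClosed_eq (by continuity) continuous_const
  have h2 : Bornology.IsBounded {p : ℝ × ℝ | p.1 ^ 2 + p.2 ^ 2 = 1} := by
    apply (Metric.isBounded_closedBall (x := (0 : ℝ × ℝ)) (r := 1)).subset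
    intro p hp
    have hp' : p.1 ^ 2 + p.2 ^ 2 = 1 := hp
    have hn : ‖p‖ = max ‖p.1‖ ‖p.2‖ := rfl
    simp only [Metric.mem_closedBall, dist_zero_right, hn, max_le_iff, Real.norm_eq_abs]
    constructor <;> nlinarith [abs_nonneg p.1, abs_nonneg p.2, sq_abs p.1, sq_abs p.2]
  exact Metric.isCompact_of_isClosed_isBounded h1 h2

def unitCircle : Set (ℝ × ℝ) := {p | p.1 ^ 2 + p.2 ^ 2 = 1}

instance : CompactSpace unitCircle := isCompact_iff_compactSpace.mp isCompact_unitCircle'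

set_option maxHeartbeats 1000000 in
/-- **Theorem `thmtrig`, a.e. case.** Korovkin-type theorem on the unit
circle: `E` a vector sublattice of `C(S¹)` containing `1, ±cos, ±sin`
(i.e. `1, ±pr_1, ±pr_2` restricted to `S¹`), and `(T n)` a sequence of weakly
nonlinear and monotone operators from `E` into `C(S¹)` converging `μ`-a.e. on the
five test functions; then `T n f → f` `μ`-a.e. for every `f ∈ E`. -/
theorem korovkin_circle_ae (μ : Measure unitCircle) [IsFiniteMeasure μ]
    (E : Set (unitCircle → ℝ))
    -- `E` is a vector sublattice of `C(S¹)`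
    (hEcont : ∀ f ∈ E, Continuous f)
    (hEadd : ∀ f ∈ E, ∀ g ∈ E, f + g ∈ E)
    (hEsmul : ∀ (c : ℝ), ∀ f ∈ E, c • f ∈ E)
    (hEsup : ∀ f ∈ E, ∀ g ∈ E, f ⊔ g ∈ E)
    -- `E` contains the five test functions `1, cos, -cos, sin, -sin`
    (hone : (fun _ : unitCircle => (1 : ℝ)) ∈ E)
    (hcos : (fun x : unitCircle => (x : ℝ × ℝ).1) ∈ E)
    (hcosneg : (fun x : unitCircle => -(x : ℝ × ℝ).1) ∈ E)
    (hsin : (fun x : unitCircle => (x : ℝ × ℝ).2) ∈ E)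
    (hsinneg : (fun x : unitCircle => -(x : ℝ × ℝ).2) ∈ E)
    -- `(T n)` weakly nonlinear and monotone from `E` into `C(S¹)`
    (T : ℕ → (unitCircle → ℝ) → (unitCircle → ℝ))
    (hmap : ∀ n, ∀ f ∈ E, Continuous (T n f))
    (hsubadd : ∀ n, ∀ f ∈ E, ∀ g ∈ E, T n (f + g) ≤ T n f + T n g)
    (hhom : ∀ n, ∀ (α : ℝ), 0 ≤ α → ∀ f ∈ E, T n (α • f) = α • T n f)
    (hmono : ∀ n, ∀ f ∈ E, ∀ g ∈ E, f ≤ g → T n f ≤ T n g)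
    (htrans : ∀ n, ∀ f ∈ E, ∀ (α : ℝ), 0 ≤ α →
      T n (f + α • (fun _ : unitCircle => (1 : ℝ)))
        = T n f + α • T n (fun _ : unitCircle => (1 : ℝ)))
    -- a.e. convergence on the five test functions
    (htest1 : ∀ᵐ x ∂μ, Tendsto (fun n => T n (fun _ => 1) x) atTop (𝓝 1))
    (htestcos : ∀ᵐ x ∂μ,
      Tendsto (fun n => T n (fun y : unitCircle => (y : ℝ × ℝ).1) x) atTop
        (𝓝 ((x : ℝ × ℝ).1)))
    (htestcosneg : ∀ᵐ x ∂μ,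
      Tendsto (fun n => T n (fun y : unitCircle => -(y : ℝ × ℝ).1) x) atTop
        (𝓝 (-(x : ℝ × ℝ).1)))
    (htestsin : ∀ᵐ x ∂μ,
      Tendsto (fun n => T n (fun y : unitCircle => (y : ℝ × ℝ).2) x) atTop
        (𝓝 ((x : ℝ × ℝ).2)))
    (htestsinneg : ∀ᵐ x ∂μ,
      Tendsto (fun n => T n (fun y : unitCircle => -(y : ℝ × ℝ).2) x) atTop
        (𝓝 (-(x : ℝ × ℝ).2))) :
    ∀ f ∈ E, ∀ᵐ x ∂μ, Tendsto (fun n => T n f x) atTop (𝓝 (f x)) := by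
  intro f hf
  obtain ⟨M, hM⟩ : ∃ M, ∀ y : unitCircle, |f y| ≤ M := by
    have hc : IsCompact (Set.range fun y => |f y|) := isCompact_range (hEcont f hf).abs
    obtain ⟨M, hM⟩ := hc.bddAbove
    exact ⟨M, fun y => hM ⟨y, rfl⟩⟩
  have hpt : ((1, 0) : ℝ × ℝ) ∈ unitCircle := by simp [unitCircle]
  have hM0 : 0 ≤ M := le_trans (abs_nonneg _) (hM ⟨(1, 0), hpt⟩)
  have hzeroE : (0 : unitCircle → ℝ) ∈ E := by
    have := hEsmul 0 _ hone
    simpa using this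
  have hTzero : ∀ n, T n (0 : unitCircle → ℝ) = 0 := by
    intro n
    have := hhom n 0 le_rfl _ hone
    simpa using this
  set one : unitCircle → ℝ := fun _ => (1 : ℝ) with hone_def
  set h : unitCircle → ℝ := f + (M + 1) • one with hh_def
  have hhE : h ∈ E := hEadd f hf _ (hEsmul (M + 1) _ hone)
  filter_upwards [htest1, htestcos, htestcosneg, htestsin, htestsinneg]
    with x h1 hc1 hcn hs1 hsn
  have key1 : ∀ c : ℝ, Tendsto (fun n => T n (c • fun y : unitCircle => (y : ℝ × ℝ).1) x)
      atTop (𝓝 (c * (x : ℝ × ℝ).1)) := by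
    intro c
    rcases le_or_gt 0 c with hc | hc
    · have heq : ∀ n, T n (c • fun y : unitCircle => (y : ℝ × ℝ).1) x
          = c * T n (fun y : unitCircle => (y : ℝ × ℝ).1) x := by
        intro n; rw [hhom n c hc _ hcos]; simp
      simp only [heq]; exact hc1.const_mul c
    · have hfe : (c • fun y : unitCircle => (y : ℝ × ℝ).1)
          = (-c) • fun y : unitCircle => -(y : ℝ × ℝ).1 := by
        funext y; simp [smul_eq_mul]
      have heq : ∀ n, T n (c • fun y : unitCircle => (y : ℝ × ℝ).1) x
          = (-c) * T n (fun y : unitCircle => -(y : ℝ × ℝ).1) x := by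
        intro n; rw [hfe, hhom n (-c) (by linarith) _ hcosneg]; simp
      simp only [heq]
      have hlim := hcn.const_mul (-c)
      convert hlim using 2; ring
  have key2 : ∀ c : ℝ, Tendsto (fun n => T n (c • fun y : unitCircle => (y : ℝ × ℝ).2) x)
      atTop (𝓝 (c * (x : ℝ × ℝ).2)) := by
    intro c
    rcases le_or_gt 0 c with hc | hc
    · have heq : ∀ n, T n (c • fun y : unitCircle => (y : ℝ × ℝ).2) x
          = c * T n (fun y : unitCircle => (y : ℝ × ℝ).2) x := by
        intro n; rw [hhom n c hc _ hsin]; simp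
      simp only [heq]; exact hs1.const_mul c
    · have hfe : (c • fun y : unitCircle => (y : ℝ × ℝ).2)
          = (-c) • fun y : unitCircle => -(y : ℝ × ℝ).2 := by
        funext y; simp [smul_eq_mul]
      have heq : ∀ n, T n (c • fun y : unitCircle => (y : ℝ × ℝ).2) x
          = (-c) * T n (fun y : unitCircle => -(y : ℝ × ℝ).2) x := by
        intro n; rw [hfe, hhom n (-c) (by linarith) _ hsinneg]; simp
      simp only [heq]
      have hlim := hsn.const_mul (-c)
      convert hlim using 2; ring
  set x1 : ℝ := (x : ℝ × ℝ).1 with hx1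
  set x2 : ℝ := (x : ℝ × ℝ).2 with hx2
  have hxc : x1 ^ 2 + x2 ^ 2 = 1 := x.2
  set g : unitCircle → ℝ :=
    (one + (-x1) • fun y : unitCircle => (y : ℝ × ℝ).1)
      + (-x2) • fun y : unitCircle => (y : ℝ × ℝ).2 with hg_def
  have hgE : g ∈ E :=
    hEadd _ (hEadd _ hone _ (hEsmul _ _ hcos)) _ (hEsmul _ _ hsin)
  have hgval : ∀ y : unitCircle, g y = 1 - x1 * (y : ℝ × ℝ).1 - x2 * (y : ℝ × ℝ).2 := by
    intro y
    simp only [hg_def, hone_def, Pi.add_apply, Pi.smul_apply, smul_eq_mul]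
    ring
  have hg0 : ∀ y, 0 ≤ g y := by
    intro y
    rw [hgval]
    have hyc : (y : ℝ × ℝ).1 ^ 2 + (y : ℝ × ℝ).2 ^ 2 = 1 := y.2
    nlinarith [sq_nonneg (x1 - (y : ℝ × ℝ).1), sq_nonneg (x2 - (y : ℝ × ℝ).2)]
  have hTg0 : ∀ n, 0 ≤ T n g x := by
    intro n
    have hm := hmono n 0 hzeroE g hgE (fun y => hg0 y)
    have := Pi.le_def.mp hm x
    rwa [hTzero n] at this
  have hTgtend : Tendsto (fun n => T n g x) atTop (𝓝 0) := by
    have hub : ∀ n, T n g x ≤ T n one x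
        + T n ((-x1) • fun y : unitCircle => (y : ℝ × ℝ).1) x
        + T n ((-x2) • fun y : unitCircle => (y : ℝ × ℝ).2) x := by
      intro n
      have m1 := hsubadd n (one + (-x1) • fun y : unitCircle => (y : ℝ × ℝ).1)
        (hEadd _ hone _ (hEsmul (-x1) _ hcos))
        ((-x2) • fun y : unitCircle => (y : ℝ × ℝ).2) (hEsmul (-x2) _ hsin)
      have m2 := hsubadd n one hone
        ((-x1) • fun y : unitCircle => (y : ℝ × ℝ).1) (hEsmul (-x1) _ hcos)
      have a1 := Pi.le_def.mp m1 x
      have a2 := Pi.le_def.mp m2 x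
      simp only [Pi.add_apply] at a1 a2
      rw [hg_def]
      linarith
    have hU : Tendsto (fun n => T n one x
        + T n ((-x1) • fun y : unitCircle => (y : ℝ × ℝ).1) x
        + T n ((-x2) • fun y : unitCircle => (y : ℝ × ℝ).2) x) atTop
        (𝓝 (1 + (-x1) * x1 + (-x2) * x2)) :=
      (h1.add (key1 (-x1))).add (key2 (-x2))
    have hz : 1 + (-x1) * x1 + (-x2) * x2 = 0 := by nlinarith
    rw [hz] at hU
    exact tendsto_of_tendsto_of_tendsto_of_le_of_le tendsto_const_nhds hU hTg0 hub
  have hfx : |f x| ≤ M := hM x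
  have hhx : h x = f x + (M + 1) := by
    simp [hh_def, hone_def, smul_eq_mul]
  have hhxge : 1 ≤ h x := by
    rw [hhx]
    have := abs_le.mp hfx
    linarith [this.1]
  have hTh : Tendsto (fun n => T n h x) atTop (𝓝 (h x)) := by
    rw [Metric.tendsto_atTop]
    intro ε0 hε0
    set ε : ℝ := min (ε0 / 3) 1 with hε_def
    have hεpos : 0 < ε := lt_min (by linarith) one_pos
    have hεle1 : ε ≤ 1 := min_le_right _ _
    have hεle : ε ≤ ε0 / 3 := min_le_left _ _
    obtain ⟨δ, hδ, hucd⟩ := Metric.uniformContinuous_iff.mp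
      (CompactSpace.uniformContinuous_of_continuous (hEcont f hf)) ε hεpos
    set K : ℝ := 4 * M / δ ^ 2 with hK
    have hK0 : 0 ≤ K := by positivity
    have claim : ∀ y : unitCircle, |f y - f x| ≤ ε + K * g y := by
      intro y
      have hgy := hg0 y
      have hyc : (y : ℝ × ℝ).1 ^ 2 + (y : ℝ × ℝ).2 ^ 2 = 1 := y.2
      have h2g : dist y x ^ 2 ≤ 2 * g y := by
        rw [hgval, Subtype.dist_eq, Prod.dist_eq, Real.dist_eq, Real.dist_eq]
        rcases max_cases |(y : ℝ × ℝ).1 - x1| |(y : ℝ × ℝ).2 - x2| with ⟨he, _⟩ | ⟨he, _⟩ <;>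
          rw [he] <;>
          nlinarith [sq_abs ((y : ℝ × ℝ).1 - x1), sq_abs ((y : ℝ × ℝ).2 - x2),
            sq_nonneg ((y : ℝ × ℝ).1 - x1), sq_nonneg ((y : ℝ × ℝ).2 - x2)]
      by_cases hdxy : dist y x < δ
      · have hud := hucd hdxy
        rw [Real.dist_eq] at hud
        nlinarith [mul_nonneg hK0 hgy]
      · push_neg at hdxy
        have hd2 : δ ^ 2 ≤ 2 * g y := by
          have hpw : δ ^ 2 ≤ dist y x ^ 2 := pow_le_pow_left₀ hδ.le hdxy 2
          linarith
        have hKg : 2 * M ≤ K * g y := by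
          have hδ2 : (0 : ℝ) < δ ^ 2 := by positivity
          rw [hK, div_mul_eq_mul_div, le_div_iff₀ hδ2]
          nlinarith [mul_nonneg hM0 (by linarith : (0:ℝ) ≤ 2 * g y - δ ^ 2)]
        have hfy := abs_le.mp (hM y)
        have hfx' := abs_le.mp hfx
        rw [abs_sub_le_iff]
        constructor <;> nlinarith
    have hup : ∀ n, T n h x ≤ (h x + ε) * T n one x + K * T n g x := by
      intro n
      have hle : h ≤ (h x + ε) • one + K • g := by
        rw [Pi.le_def]
        intro y
        have hc := abs_le.mp (claim y)
        simp only [hh_def, hone_def, Pi.add_apply, Pi.smul_apply, smul_eq_mul]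
        have hgy := hg0 y
        nlinarith [hc.1]
      have m1 := hmono n h hhE _ (hEadd _ (hEsmul _ _ hone) _ (hEsmul _ _ hgE)) hle
      have m2 := hsubadd n ((h x + ε) • one) (hEsmul _ _ hone) (K • g) (hEsmul _ _ hgE)
      have e1 := hhom n (h x + ε) (by linarith) _ hone
      have e2 := hhom n K hK0 _ hgE
      have a1 := Pi.le_def.mp m1 x
      have a2 := Pi.le_def.mp m2 x
      have b1 := congrFun e1 x
      have b2 := congrFun e2 x
      simp only [Pi.add_apply, Pi.smul_apply, smul_eq_mul] at a1 a2 b1 b2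
      rw [b1, b2] at a2
      linarith
    have hlo : ∀ n, (h x - ε) * T n one x - K * T n g x ≤ T n h x := by
      intro n
      have hle : (h x - ε) • one ≤ h + K • g := by
        rw [Pi.le_def]
        intro y
        have hc := abs_le.mp (claim y)
        simp only [hh_def, hone_def, Pi.add_apply, Pi.smul_apply, smul_eq_mul]
        have hgy := hg0 y
        nlinarith [hc.2]
      have m1 := hmono n _ (hEsmul _ _ hone) _ (hEadd _ hhE _ (hEsmul _ _ hgE)) hle
      have m2 := hsubadd n h hhE (K • g) (hEsmul _ _ hgE)
      have e1 := hhom n (h x - ε) (by linarith) _ hone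
      have e2 := hhom n K hK0 _ hgE
      have a1 := Pi.le_def.mp m1 x
      have a2 := Pi.le_def.mp m2 x
      have b1 := congrFun e1 x
      have b2 := congrFun e2 x
      simp only [Pi.add_apply, Pi.smul_apply, smul_eq_mul] at a1 a2 b1 b2
      rw [b1] at a1
      rw [b2] at a2
      linarith
    have hUt : Tendsto (fun n => (h x + ε) * T n one x + K * T n g x) atTop
        (𝓝 ((h x + ε) * 1 + K * 0)) :=
      (h1.const_mul _).add (hTgtend.const_mul K)
    have hLt : Tendsto (fun n => (h x - ε) * T n one x - K * T n g x) atTop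
        (𝓝 ((h x - ε) * 1 - K * 0)) :=
      (h1.const_mul _).sub (hTgtend.const_mul K)
    obtain ⟨N1, hN1⟩ := Metric.tendsto_atTop.mp hUt (ε0 / 3) (by linarith)
    obtain ⟨N2, hN2⟩ := Metric.tendsto_atTop.mp hLt (ε0 / 3) (by linarith)
    refine ⟨max N1 N2, fun n hn => ?_⟩
    have hU' := hN1 n (le_trans (le_max_left _ _) hn)
    have hL' := hN2 n (le_trans (le_max_right _ _) hn)
    rw [Real.dist_eq] at hU' hL' ⊢
    have hU'' := abs_lt.mp hU'
    have hL'' := abs_lt.mp hL'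
    have hu := hup n
    have hl := hlo n
    rw [abs_lt]
    constructor <;> nlinarith [hU''.1, hU''.2, hL''.1, hL''.2]
  have hid : ∀ n, T n f x = T n h x - (M + 1) * T n one x := by
    intro n
    have ht := htrans n f hf (M + 1) (by linarith)
    have := congrFun ht x
    rw [← hh_def] at this
    simp only [Pi.add_apply, Pi.smul_apply, smul_eq_mul] at this
    linarith
  simp only [hid]
  have hfinal := hTh.sub (h1.const_mul (M + 1))
  have : h x - (M + 1) * 1 = f x := by rw [hhx]; ring
  rw [this] at hfinal
  exact hfinal
end

section
/- Let X be a locally compact subset of ℝ^N equipped with a positive Borel measure μ, and let E be a vector sublattice of the real-valued functions on X containing the restrictions to X of the test functions 1, pr_1, …, pr_N, −pr_1, …, −pr_N and Σ_{k=1}^N pr_k². Let (T_n) be a sequence of weakly nonlinear (sublinear and translatable) and monotone operators from E into E, and set U_n := (1/n) Σ_{k=1}^n T_k (the Cesàro means). Then each U_n is weakly nonlinear and monotone, and if U_n(h)(x) → h(x) for μ-almost every x ∈ X for each of the test functions h, then for every f ∈ E that is bounded and whose set of points of discontinuity is μ-null one has U_n(f)(x) → f(x) for μ-almost every x ∈ X.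 -/
/-!
Korovkin's argument, for sublinear rather than linear operators. If `f` is bounded and
continuous at `x`, then for every `ε > 0` there is `c ≥ 0` with
`|f y - f x| ≤ ε + c ∑ₖ (yₖ - xₖ)²`, and `φ(y) = c ∑ₖ ((yₖ - xₖ)² - xₖ²)` is a combination of the
test functions `∑ₖ prₖ²`, `prₖ`, `-prₖ` with nonnegative coefficients. Sublinearity therefore
gives `limsup Uₙ φ (x) ≤ φ(x)`, and monotonicity together with translatability squeezes
`Uₙ f (x)` between sequences tending to `f(x) ± ε`. The Cesàro means of weakly nonlinear monotone
operators are again such operators, since these form a convex cone.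
-/

open MeasureTheory Filter Topology

section WeaklyNonlinear

variable {X : Type*}

structure IsWeaklyNonlinearMonotone (E : Submodule ℝ (X → ℝ)) (T : (X → ℝ) → X → ℝ) : Prop where
  mapsTo : ∀ f ∈ E, T f ∈ E
  map_add_le : ∀ f ∈ E, ∀ g ∈ E, T (f + g) ≤ T f + T g
  map_smul_of_nonneg : ∀ α : ℝ, 0 ≤ α → ∀ f ∈ E, T (α • f) = α • T f
  mono : ∀ f ∈ E, ∀ g ∈ E, f ≤ g → T f ≤ T g
  map_add_smul_one_of_nonneg : ∀ f ∈ E, ∀ α : ℝ, 0 ≤ α → T (f + α • 1) = T f + α • T 1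

namespace IsWeaklyNonlinearMonotone

variable {E : Submodule ℝ (X → ℝ)} {T S : (X → ℝ) → X → ℝ}

lemma zero : IsWeaklyNonlinearMonotone E 0 where
  mapsTo _ _ := E.zero_mem
  map_add_le _ _ _ _ := by simp
  map_smul_of_nonneg _ _ _ _ := by simp
  mono _ _ _ _ _ := le_rfl
  map_add_smul_one_of_nonneg _ _ _ _ := by simp

lemma add (hT : IsWeaklyNonlinearMonotone E T) (hS : IsWeaklyNonlinearMonotone E S) :
    IsWeaklyNonlinearMonotone E (T + S) where
  mapsTo f hf := add_mem (hT.mapsTo f hf) (hS.mapsTo f hf)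
  map_add_le f hf g hg :=
    (add_le_add (hT.map_add_le f hf g hg) (hS.map_add_le f hf g hg)).trans_eq
      (add_add_add_comm _ _ _ _)
  map_smul_of_nonneg α hα f hf := by
    simp only [Pi.add_apply, hT.map_smul_of_nonneg α hα f hf, hS.map_smul_of_nonneg α hα f hf,
      smul_add]
  mono f hf g hg hfg := add_le_add (hT.mono f hf g hg hfg) (hS.mono f hf g hg hfg)
  map_add_smul_one_of_nonneg f hf α hα := by
    simp only [Pi.add_apply, hT.map_add_smul_one_of_nonneg f hf α hα,
      hS.map_add_smul_one_of_nonneg f hf α hα, smul_add]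
    abel

lemma smul (hT : IsWeaklyNonlinearMonotone E T) {c : ℝ} (hc : 0 ≤ c) :
    IsWeaklyNonlinearMonotone E (c • T) where
  mapsTo f hf := E.smul_mem c (hT.mapsTo f hf)
  map_add_le f hf g hg :=
    (smul_le_smul_of_nonneg_left (hT.map_add_le f hf g hg) hc).trans_eq (smul_add c _ _)
  map_smul_of_nonneg α hα f hf := by
    simp only [Pi.smul_apply, hT.map_smul_of_nonneg α hα f hf, smul_comm c α]
  mono f hf g hg hfg := smul_le_smul_of_nonneg_left (hT.mono f hf g hg hfg) hc
  map_add_smul_one_of_nonneg f hf α hα := by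
    simp only [Pi.smul_apply, hT.map_add_smul_one_of_nonneg f hf α hα, smul_add, smul_comm c α]

lemma sum {ι : Type*} {s : Finset ι} {T : ι → (X → ℝ) → X → ℝ}
    (hT : ∀ i ∈ s, IsWeaklyNonlinearMonotone E (T i)) :
    IsWeaklyNonlinearMonotone E (∑ i ∈ s, T i) :=
  Finset.sum_induction T _ (fun _ _ => add) zero hT

variable (hT : IsWeaklyNonlinearMonotone E T)
include hT

lemma map_zero : T 0 = 0 := by
  simpa using hT.map_smul_of_nonneg 0 le_rfl 0 E.zero_mem

lemma map_add_smul_one (h1 : 1 ∈ E) {f : X → ℝ} (hf : f ∈ E) (α : ℝ) :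
    T (f + α • 1) = T f + α • T 1 := by
  rcases le_total 0 α with hα | hα
  · exact hT.map_add_smul_one_of_nonneg f hf α hα
  · have h := hT.map_add_smul_one_of_nonneg (f + α • 1) (add_mem hf (E.smul_mem α h1)) (-α)
      (neg_nonneg.2 hα)
    rw [add_assoc, ← add_smul, add_neg_cancel, zero_smul, add_zero] at h
    rw [h, neg_smul, neg_add_cancel_right]

lemma map_smul_one (h1 : 1 ∈ E) (α : ℝ) : T (α • 1) = α • T 1 := by
  simpa [hT.map_zero] using hT.map_add_smul_one h1 E.zero_mem α

end IsWeaklyNonlinearMonotone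

theorem tendsto_of_forall_pos_exists_le_le {ι : Type*} {l : Filter ι} {u : ι → ℝ} {a : ℝ}
    (h : ∀ ε > 0, ∃ lo hi : ι → ℝ, Tendsto lo l (𝓝 (a - ε)) ∧ Tendsto hi l (𝓝 (a + ε)) ∧
      ∀ i, lo i ≤ u i ∧ u i ≤ hi i) :
    Tendsto u l (𝓝 a) := by
  refine tendsto_order.2 ⟨fun b hb => ?_, fun b hb => ?_⟩
  · obtain ⟨lo, _, hlo, _, hle⟩ := h ((a - b) / 2) (by linarith)
    exact (hlo.eventually (lt_mem_nhds (by linarith))).mono fun i hi => hi.trans_le (hle i).1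
  · obtain ⟨_, hi, _, hhi, hle⟩ := h ((b - a) / 2) (by linarith)
    exact (hhi.eventually (gt_mem_nhds (by linarith))).mono fun i h => (hle i).2.trans_lt h

/-- `limsup_n U n g x ≤ g x`, witnessed by a dominating sequence. -/
def LimsupApplyLE (U : ℕ → (X → ℝ) → X → ℝ) (x : X) (g : X → ℝ) : Prop :=
  ∃ r : ℕ → ℝ, (∀ n, U n g x ≤ r n) ∧ Tendsto r atTop (𝓝 (g x))

namespace LimsupApplyLE

variable {E : Submodule ℝ (X → ℝ)} {U : ℕ → (X → ℝ) → X → ℝ} {x : X} {g h : X → ℝ}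

lemma of_tendsto (hg : Tendsto (fun n => U n g x) atTop (𝓝 (g x))) : LimsupApplyLE U x g :=
  ⟨_, fun _ => le_rfl, hg⟩

variable (hU : ∀ n, IsWeaklyNonlinearMonotone E (U n))
include hU

lemma add (hgE : g ∈ E) (hhE : h ∈ E) (hg : LimsupApplyLE U x g) (hh : LimsupApplyLE U x h) :
    LimsupApplyLE U x (g + h) := by
  obtain ⟨r, hUr, hr⟩ := hg
  obtain ⟨s, hUs, hs⟩ := hh
  exact ⟨r + s, fun n => ((hU n).map_add_le g hgE h hhE x).trans (add_le_add (hUr n) (hUs n)),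
    hr.add hs⟩

lemma smul {c : ℝ} (hc : 0 ≤ c) (hgE : g ∈ E) (hg : LimsupApplyLE U x g) :
    LimsupApplyLE U x (c • g) := by
  obtain ⟨r, hUr, hr⟩ := hg
  refine ⟨c • r, fun n => ?_, hr.const_smul c⟩
  rw [(hU n).map_smul_of_nonneg c hc g hgE]
  exact mul_le_mul_of_nonneg_left (hUr n) hc

lemma sum {ι : Type*} {s : Finset ι} {g : ι → X → ℝ}
    (hg : ∀ i ∈ s, g i ∈ E ∧ LimsupApplyLE U x (g i)) :
    (∑ i ∈ s, g i) ∈ E ∧ LimsupApplyLE U x (∑ i ∈ s, g i) :=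
  Finset.sum_induction g (fun g => g ∈ E ∧ LimsupApplyLE U x g)
    (fun _ _ ha hb => ⟨add_mem ha.1 hb.1, add hU ha.1 hb.1 ha.2 hb.2⟩)
    ⟨E.zero_mem, .of_tendsto (by simp [(hU _).map_zero])⟩ hg

end LimsupApplyLE

theorem tendsto_apply_of_forall_limsupApplyLE {E : Submodule ℝ (X → ℝ)}
    {U : ℕ → (X → ℝ) → X → ℝ} (hU : ∀ n, IsWeaklyNonlinearMonotone E (U n)) (h1 : 1 ∈ E)
    {x : X} (hU1 : Tendsto (fun n => U n 1 x) atTop (𝓝 1)) {f : X → ℝ} (hf : f ∈ E)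
    (hφ : ∀ ε > 0, ∃ φ ∈ E, LimsupApplyLE U x φ ∧ ∀ y, |f y - f x| ≤ ε + (φ y - φ x)) :
    Tendsto (fun n => U n f x) atTop (𝓝 (f x)) := by
  refine tendsto_of_forall_pos_exists_le_le fun ε hε => ?_
  obtain ⟨φ, hφE, ⟨r, hUr, hr⟩, hfφ⟩ := hφ ε hε
  refine ⟨fun n => (f x - ε + φ x) * U n 1 x - r n, fun n => r n + (f x + ε - φ x) * U n 1 x,
    ?_, ?_, fun n => ⟨?_, ?_⟩⟩
  · convert (hU1.const_mul _).sub hr using 2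
    ring
  · convert hr.add (hU1.const_mul _) using 2
    ring
  · have hle : (f x - ε + φ x) • (1 : X → ℝ) ≤ f + φ := fun y => by
      have := (abs_le.1 (hfφ y)).1
      simp only [Pi.smul_apply, Pi.one_apply, smul_eq_mul, mul_one, Pi.add_apply]
      linarith
    have h := ((hU n).mono _ (E.smul_mem _ h1) _ (add_mem hf hφE) hle).trans
      ((hU n).map_add_le f hf φ hφE) x
    rw [(hU n).map_smul_one h1] at h
    simp only [Pi.smul_apply, smul_eq_mul, Pi.add_apply] at h
    linarith [hUr n]
  · have hle : f ≤ φ + (f x + ε - φ x) • (1 : X → ℝ) := fun y => by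
      have := (abs_le.1 (hfφ y)).2
      simp only [Pi.smul_apply, Pi.one_apply, smul_eq_mul, mul_one, Pi.add_apply]
      linarith
    have h := (hU n).mono _ hf _ (add_mem hφE (E.smul_mem _ h1)) hle x
    rw [(hU n).map_add_smul_one h1 hφE] at h
    simp only [Pi.smul_apply, smul_eq_mul, Pi.add_apply] at h
    linarith [hUr n]

end WeaklyNonlinear

theorem exists_abs_sub_le_add_mul_dist_sq {α : Type*} [PseudoMetricSpace α] {f : α → ℝ}
    {M : ℝ} (hM : ∀ y, |f y| ≤ M) {x : α} (hf : ContinuousAt f x) {ε : ℝ} (hε : 0 < ε) :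
    ∃ c ≥ 0, ∀ y, |f y - f x| ≤ ε + c * dist y x ^ 2 := by
  obtain ⟨δ, hδ, hδf⟩ := Metric.continuousAt_iff.1 hf ε hε
  have hM0 : 0 ≤ M := (abs_nonneg _).trans (hM x)
  refine ⟨2 * M / δ ^ 2, by positivity, fun y => ?_⟩
  have hc : 0 ≤ 2 * M / δ ^ 2 * dist y x ^ 2 := by positivity
  rcases lt_or_ge (dist y x) δ with hy | hy
  · have := hδf hy
    rw [Real.dist_eq] at this
    linarith
  · calc |f y - f x| ≤ |f y| + |f x| := abs_sub _ _
      _ ≤ 2 * M / δ ^ 2 * δ ^ 2 := by rw [div_mul_cancel₀ _ (by positivity)]; linarith [hM y, hM x]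
      _ ≤ 2 * M / δ ^ 2 * dist y x ^ 2 := by gcongr
      _ ≤ ε + 2 * M / δ ^ 2 * dist y x ^ 2 := by linarith

theorem dist_sq_le_sum_sq {ι : Type*} [Fintype ι] (y x : ι → ℝ) :
    dist y x ^ 2 ≤ ∑ k, (y k - x k) ^ 2 := by
  have hsum : 0 ≤ ∑ k, (y k - x k) ^ 2 := Finset.sum_nonneg fun k _ => sq_nonneg _
  have hdist : dist y x ≤ √(∑ k, (y k - x k) ^ 2) :=
    (dist_pi_le_iff (Real.sqrt_nonneg _)).2 fun k => by
      rw [Real.dist_eq]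
      exact Real.abs_le_sqrt
        (Finset.single_le_sum (fun i _ => sq_nonneg (y i - x i)) (Finset.mem_univ k))
  calc dist y x ^ 2 ≤ √(∑ k, (y k - x k) ^ 2) ^ 2 := by gcongr
    _ = ∑ k, (y k - x k) ^ 2 := Real.sq_sqrt hsum

section Euclidean

variable {ι : Type*} [Fintype ι] {X : Set (ι → ℝ)}

lemma sum_sq_sub_sub_sq_eq (x : ι → ℝ) :
    (fun y : X => ∑ k, (((y : ι → ℝ) k - x k) ^ 2 - x k ^ 2)) =
      (fun y : X => ∑ k, (y : ι → ℝ) k ^ 2) +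
        ∑ k, (2 * (x k)⁻) • (fun y : X => (y : ι → ℝ) k) +
        ∑ k, (2 * (x k)⁺) • (fun y : X => -(y : ι → ℝ) k) := by
  funext y
  simp only [Pi.add_apply, Finset.sum_apply, Pi.smul_apply, smul_eq_mul,
    ← Finset.sum_add_distrib]
  exact Finset.sum_congr rfl fun k _ =>
    by linear_combination 2 * (y : ι → ℝ) k * posPart_sub_negPart (x k)

variable {E : Submodule ℝ (X → ℝ)} {U : ℕ → (X → ℝ) → X → ℝ}
  (hU : ∀ n, IsWeaklyNonlinearMonotone E (U n))
  (hpr : ∀ k, (fun y : X => (y : ι → ℝ) k) ∈ E)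
  (hprneg : ∀ k, (fun y : X => -(y : ι → ℝ) k) ∈ E)
  (hsq : (fun y : X => ∑ k, (y : ι → ℝ) k ^ 2) ∈ E)
  {x : X}
  (hxpr : ∀ k, Tendsto (fun n => U n (fun y : X => (y : ι → ℝ) k) x) atTop
    (𝓝 ((x : ι → ℝ) k)))
  (hxprneg : ∀ k, Tendsto (fun n => U n (fun y : X => -(y : ι → ℝ) k) x) atTop
    (𝓝 (-(x : ι → ℝ) k)))
  (hxsq : Tendsto (fun n => U n (fun y : X => ∑ k, (y : ι → ℝ) k ^ 2) x) atTop
    (𝓝 (∑ k, (x : ι → ℝ) k ^ 2)))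
include hU hpr hprneg hsq hxpr hxprneg hxsq

lemma mem_and_limsupApplyLE_sum_sq_sub_sub_sq :
    (fun y : X => ∑ k, (((y : ι → ℝ) k - (x : ι → ℝ) k) ^ 2 - (x : ι → ℝ) k ^ 2)) ∈ E ∧
      LimsupApplyLE U x
        (fun y : X => ∑ k, (((y : ι → ℝ) k - (x : ι → ℝ) k) ^ 2 - (x : ι → ℝ) k ^ 2)) := by
  rw [sum_sq_sub_sub_sq_eq]
  have hlin := LimsupApplyLE.sum (s := Finset.univ)
    (g := fun k => (2 * ((x : ι → ℝ) k)⁻) • fun y : X => (y : ι → ℝ) k) hU fun k _ =>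
    ⟨E.smul_mem _ (hpr k), (LimsupApplyLE.of_tendsto (hxpr k)).smul hU
      (mul_nonneg zero_le_two (negPart_nonneg _)) (hpr k)⟩
  have hlin' := LimsupApplyLE.sum (s := Finset.univ)
    (g := fun k => (2 * ((x : ι → ℝ) k)⁺) • fun y : X => -(y : ι → ℝ) k) hU fun k _ =>
    ⟨E.smul_mem _ (hprneg k), (LimsupApplyLE.of_tendsto (hxprneg k)).smul hU
      (mul_nonneg zero_le_two (posPart_nonneg _)) (hprneg k)⟩
  have hq := (LimsupApplyLE.of_tendsto hxsq).add hU hsq hlin.1 hlin.2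
  exact ⟨add_mem (add_mem hsq hlin.1) hlin'.1, hq.add hU (add_mem hsq hlin.1) hlin'.1 hlin'.2⟩

theorem tendsto_apply_of_tendsto_test (h1 : 1 ∈ E)
    (hx1 : Tendsto (fun n => U n 1 x) atTop (𝓝 1)) {f : X → ℝ} (hf : f ∈ E) {M : ℝ}
    (hM : ∀ y, |f y| ≤ M) (hfx : ContinuousAt f x) :
    Tendsto (fun n => U n f x) atTop (𝓝 (f x)) := by
  refine tendsto_apply_of_forall_limsupApplyLE hU h1 hx1 hf fun ε hε => ?_
  obtain ⟨c, hc, hfc⟩ := exists_abs_sub_le_add_mul_dist_sq hM hfx hε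
  obtain ⟨hqE, hq⟩ :=
    mem_and_limsupApplyLE_sum_sq_sub_sub_sq hU hpr hprneg hsq hxpr hxprneg hxsq
  refine ⟨_, E.smul_mem c hqE, hq.smul hU hc hqE, fun y => ?_⟩
  calc |f y - f x| ≤ ε + c * dist y x ^ 2 := hfc y
    _ ≤ ε + c * ∑ k, ((y : ι → ℝ) k - (x : ι → ℝ) k) ^ 2 := by
      gcongr
      exact dist_sq_le_sum_sq _ _
    _ = _ := by
      simp only [Pi.smul_apply, smul_eq_mul, sub_self]
      rw [← mul_sub, ← Finset.sum_sub_distrib]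
      ring_nf

end Euclidean

theorem korovkin_ae_cesaro_general {N : ℕ} (X : Set (Fin N → ℝ))
    (μ : Measure X)
    (E : Set (X → ℝ))
    -- `E` is a vector sublattice of `𝓕(X)`
    (hEadd : ∀ f ∈ E, ∀ g ∈ E, f + g ∈ E)
    (hEsmul : ∀ (c : ℝ), ∀ f ∈ E, c • f ∈ E)
    -- `E` contains the test functions
    (hone : (fun _ : X => (1 : ℝ)) ∈ E)
    (hpr : ∀ k : Fin N, (fun x : X => (x : Fin N → ℝ) k) ∈ E)
    (hprneg : ∀ k : Fin N, (fun x : X => -((x : Fin N → ℝ) k)) ∈ E)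
    (hsq : (fun x : X => ∑ k, ((x : Fin N → ℝ) k) ^ 2) ∈ E)
    -- `(T n)` weakly nonlinear and monotone, from `E` into `E`
    (T : ℕ → (X → ℝ) → (X → ℝ))
    (hmap : ∀ n, ∀ f ∈ E, T n f ∈ E)
    (hsubadd : ∀ n, ∀ f ∈ E, ∀ g ∈ E, T n (f + g) ≤ T n f + T n g)
    (hhom : ∀ n, ∀ (α : ℝ), 0 ≤ α → ∀ f ∈ E, T n (α • f) = α • T n f)
    (hmono : ∀ n, ∀ f ∈ E, ∀ g ∈ E, f ≤ g → T n f ≤ T n g)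
    (htrans : ∀ n, ∀ f ∈ E, ∀ (α : ℝ), 0 ≤ α →
      T n (f + α • (fun _ : X => (1 : ℝ))) = T n f + α • T n (fun _ : X => (1 : ℝ)))
    -- the Cesàro means `U n = (1/n) Σ_{k=1}^n T k`
    (U : ℕ → (X → ℝ) → (X → ℝ))
    (hU : ∀ n f, U n f = ((n : ℝ))⁻¹ • ∑ k ∈ Finset.Icc 1 n, T k f) :
    -- each `U n` is a weakly nonlinear and monotone operator from `E` into `E`
    ((∀ n, 1 ≤ n →
      ((∀ f ∈ E, U n f ∈ E) ∧
       (∀ f ∈ E, ∀ g ∈ E, U n (f + g) ≤ U n f + U n g) ∧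
       (∀ (α : ℝ), 0 ≤ α → ∀ f ∈ E, U n (α • f) = α • U n f) ∧
       (∀ f ∈ E, ∀ g ∈ E, f ≤ g → U n f ≤ U n g) ∧
       (∀ f ∈ E, ∀ (α : ℝ), 0 ≤ α →
         U n (f + α • (fun _ : X => (1 : ℝ)))
           = U n f + α • U n (fun _ : X => (1 : ℝ))))) ∧
    -- and the Korovkin a.e. criterion holds for the sequence `(U n)`
    (((∀ᵐ x ∂μ, Tendsto (fun n => U n (fun _ => 1) x) atTop (𝓝 1)) ∧
      (∀ k : Fin N, ∀ᵐ x ∂μ,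
        Tendsto (fun n => U n (fun y : X => (y : Fin N → ℝ) k) x) atTop
          (𝓝 ((x : Fin N → ℝ) k))) ∧
      (∀ k : Fin N, ∀ᵐ x ∂μ,
        Tendsto (fun n => U n (fun y : X => -((y : Fin N → ℝ) k)) x) atTop
          (𝓝 (-((x : Fin N → ℝ) k)))) ∧
      (∀ᵐ x ∂μ,
        Tendsto (fun n => U n (fun y : X => ∑ k, ((y : Fin N → ℝ) k) ^ 2) x) atTop
          (𝓝 (∑ k, ((x : Fin N → ℝ) k) ^ 2)))) →
      ∀ f ∈ E, (∃ M : ℝ, ∀ x, |f x| ≤ M) → μ {x | ¬ ContinuousAt f x} = 0 →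
        ∀ᵐ x ∂μ, Tendsto (fun n => U n f x) atTop (𝓝 (f x)))) := by
  let V : Submodule ℝ (X → ℝ) :=
    { carrier := E
      add_mem' := fun hf hg => hEadd _ hf _ hg
      zero_mem' := by simpa using hEsmul 0 _ hone
      smul_mem' := hEsmul }
  have hUV : ∀ n, IsWeaklyNonlinearMonotone V (U n) := fun n => by
    have hUn : U n = (n : ℝ)⁻¹ • ∑ k ∈ Finset.Icc 1 n, T k :=
      funext fun f => by rw [hU, Pi.smul_apply, Finset.sum_apply]
    rw [hUn]
    exact (IsWeaklyNonlinearMonotone.sum fun k _ =>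
      ⟨hmap k, hsubadd k, hhom k, hmono k, htrans k⟩).smul (by positivity)
  refine ⟨fun n _ => ⟨(hUV n).mapsTo, (hUV n).map_add_le, (hUV n).map_smul_of_nonneg,
    (hUV n).mono, (hUV n).map_add_smul_one_of_nonneg⟩, ?_⟩
  rintro ⟨h1, hpr', hprneg', hsq'⟩ f hf ⟨M, hM⟩ hdisc
  filter_upwards [h1, ae_all_iff.2 hpr', ae_all_iff.2 hprneg', hsq', ae_iff.2 hdisc]
    with x hx1 hxpr hxprneg hxsq hxf
  exact tendsto_apply_of_tendsto_test hUV hpr hprneg hsq hxpr hxprneg hxsq hone hx1 hf hM hxf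

/-- **Cesàro means.** If `(T n)` is a sequence of weakly nonlinear and
monotone operators from a vector sublattice `E` (of functions on a locally compact
`X ⊆ ℝ^N`, containing the test functions) into itself, then the Cesàro means
`U n = (1/n) Σ_{k=1}^n T k` are weakly nonlinear and monotone operators from `E` into
`E`, and the Korovkin-type criterion for a.e. convergence holds for them: if
`U n h → h` `μ`-a.e. for each test function `h`, then `U n f → f` `μ`-a.e. for every
bounded `f ∈ E` whose set of discontinuity points is `μ`-null. -/
theorem korovkin_ae_cesaro {N : ℕ} (X : Set (Fin N → ℝ)) [LocallyCompactSpace X]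
    (μ : Measure X)
    (E : Set (X → ℝ))
    -- `E` is a vector sublattice of `𝓕(X)`
    (hEadd : ∀ f ∈ E, ∀ g ∈ E, f + g ∈ E)
    (hEsmul : ∀ (c : ℝ), ∀ f ∈ E, c • f ∈ E)
    (hEsup : ∀ f ∈ E, ∀ g ∈ E, f ⊔ g ∈ E)
    -- `E` contains the test functions
    (hone : (fun _ : X => (1 : ℝ)) ∈ E)
    (hpr : ∀ k : Fin N, (fun x : X => (x : Fin N → ℝ) k) ∈ E)
    (hprneg : ∀ k : Fin N, (fun x : X => -((x : Fin N → ℝ) k)) ∈ E)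
    (hsq : (fun x : X => ∑ k, ((x : Fin N → ℝ) k) ^ 2) ∈ E)
    -- `(T n)` weakly nonlinear and monotone, from `E` into `E`
    (T : ℕ → (X → ℝ) → (X → ℝ))
    (hmap : ∀ n, ∀ f ∈ E, T n f ∈ E)
    (hsubadd : ∀ n, ∀ f ∈ E, ∀ g ∈ E, T n (f + g) ≤ T n f + T n g)
    (hhom : ∀ n, ∀ (α : ℝ), 0 ≤ α → ∀ f ∈ E, T n (α • f) = α • T n f)
    (hmono : ∀ n, ∀ f ∈ E, ∀ g ∈ E, f ≤ g → T n f ≤ T n g)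
    (htrans : ∀ n, ∀ f ∈ E, ∀ (α : ℝ), 0 ≤ α →
      T n (f + α • (fun _ : X => (1 : ℝ))) = T n f + α • T n (fun _ : X => (1 : ℝ)))
    -- the Cesàro means `U n = (1/n) Σ_{k=1}^n T k`
    (U : ℕ → (X → ℝ) → (X → ℝ))
    (hU : ∀ n f, U n f = ((n : ℝ))⁻¹ • ∑ k ∈ Finset.Icc 1 n, T k f) :
    -- each `U n` is a weakly nonlinear and monotone operator from `E` into `E`
    ((∀ n, 1 ≤ n →
      ((∀ f ∈ E, U n f ∈ E) ∧
       (∀ f ∈ E, ∀ g ∈ E, U n (f + g) ≤ U n f + U n g) ∧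
       (∀ (α : ℝ), 0 ≤ α → ∀ f ∈ E, U n (α • f) = α • U n f) ∧
       (∀ f ∈ E, ∀ g ∈ E, f ≤ g → U n f ≤ U n g) ∧
       (∀ f ∈ E, ∀ (α : ℝ), 0 ≤ α →
         U n (f + α • (fun _ : X => (1 : ℝ)))
           = U n f + α • U n (fun _ : X => (1 : ℝ))))) ∧
    -- and the Korovkin a.e. criterion holds for the sequence `(U n)`
    (((∀ᵐ x ∂μ, Tendsto (fun n => U n (fun _ => 1) x) atTop (𝓝 1)) ∧
      (∀ k : Fin N, ∀ᵐ x ∂μ,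
        Tendsto (fun n => U n (fun y : X => (y : Fin N → ℝ) k) x) atTop
          (𝓝 ((x : Fin N → ℝ) k))) ∧
      (∀ k : Fin N, ∀ᵐ x ∂μ,
        Tendsto (fun n => U n (fun y : X => -((y : Fin N → ℝ) k)) x) atTop
          (𝓝 (-((x : Fin N → ℝ) k)))) ∧
      (∀ᵐ x ∂μ,
        Tendsto (fun n => U n (fun y : X => ∑ k, ((y : Fin N → ℝ) k) ^ 2) x) atTop
          (𝓝 (∑ k, ((x : Fin N → ℝ) k) ^ 2)))) →
      ∀ f ∈ E, (∃ M : ℝ, ∀ x, |f x| ≤ M) → μ {x | ¬ ContinuousAt f x} = 0 →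
        ∀ᵐ x ∂μ, Tendsto (fun n => U n f x) atTop (𝓝 (f x)))) :=
  korovkin_ae_cesaro_general X μ E hEadd hEsmul hone hpr hprneg hsq T hmap hsubadd hhom hmono htrans
    U hU
end
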